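/- arXiv:math/0010193 — 9 statements merged into one kernel-verified Lean document; each statement's English description precedes it below -/
import Mathlib

section
/- For every 1 ≤ i ≤ n, the formal derivative of the polynomial s_{n,i}(t) over F_p equals the q-th power of the (n−1, q)-elementary symmetric polynomial s_{n−1,i−1}(t), i.e. (s_{n,i}(t))' = (s_{n−1,i−1}(t))^q in F_p[t]. -/
open Polynomial

/-- The `i`-th `(n,q)`-elementary symmetric polynomial
`s_{n,i}(t) = Σ_{S ⊆ {0,…,n−1}, |S| = i} t^(Σ_{j ∈ S} q^j)`. -/
noncomputable def snq (q n i : ℕ) (R : Type*) [CommRing R] : Polynomial R :=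
  ∑ S ∈ Finset.powersetCard i (Finset.range n), X ^ (∑ j ∈ S, q ^ j)

theorem stmt_2 (p e n i q : ℕ) (hp : p.Prime) (he : 0 < e) (hn : 2 ≤ n)
    (hi1 : 1 ≤ i) (hin : i ≤ n) (hq : q = p ^ e) :
    Polynomial.derivative (snq q n i (ZMod p)) = (snq q (n - 1) (i - 1) (ZMod p)) ^ q := by
  haveI : Fact p.Prime := ⟨hp⟩
  have hq1 : 1 ≤ q := by subst hq; exact Nat.one_le_pow _ _ hp.pos
  have hq0 : (q : ZMod p) = 0 := by
    subst hq; push_cast; simp [zero_pow he.ne']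
  have hRHS : (snq q (n - 1) (i - 1) (ZMod p)) ^ q =
      ∑ T ∈ Finset.powersetCard (i-1) (Finset.range (n-1)), X ^ ((∑ j ∈ T, q ^ j) * q) := by
    rw [snq, hq, sum_pow_char_pow]
    simp [← pow_mul, ← hq]
  rw [hRHS, snq, map_sum]
  have hterm : ∀ S ∈ Finset.powersetCard i (Finset.range n),
      derivative ((X : (ZMod p)[X]) ^ (∑ j ∈ S, q ^ j)) =
      if 0 ∈ S then X ^ ((∑ j ∈ S, q ^ j) - 1) else 0 := by
    intro S hS
    rw [derivative_X_pow]
    have hc : ((∑ j ∈ S, q ^ j : ℕ) : ZMod p) = if 0 ∈ S then 1 else 0 := by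
      push_cast
      rw [hq0]
      simp only [zero_pow_eq]
      exact Finset.sum_ite_eq' S 0 (fun _ => 1)
    rw [hc]
    split_ifs with h <;> simp
  rw [Finset.sum_congr rfl hterm, ← Finset.sum_filter]
  refine Finset.sum_nbij' (fun S => (S.erase 0).image (· - 1))
      (fun T => insert 0 (T.image (· + 1))) ?_ ?_ ?_ ?_ ?_
  · intro S hS
    simp only [Finset.mem_filter, Finset.mem_powersetCard] at hS
    obtain ⟨⟨hsub, hcard⟩, h0⟩ := hS
    rw [Finset.mem_powersetCard]
    constructor
    · intro x hx
      simp only [Finset.mem_image, Finset.mem_erase] at hx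
      obtain ⟨y, ⟨hy0, hyS⟩, rfl⟩ := hx
      have := Finset.mem_range.mp (hsub hyS)
      rw [Finset.mem_range]
      omega
    · rw [Finset.card_image_of_injOn, Finset.card_erase_of_mem h0, hcard]
      intro a ha b hb hab
      simp only [Finset.mem_coe, Finset.mem_erase] at ha hb
      simp only at hab
      omega
  · intro T hT
    rw [Finset.mem_powersetCard] at hT
    obtain ⟨hsub, hcard⟩ := hT
    simp only [Finset.mem_filter, Finset.mem_powersetCard]
    have h0 : 0 ∉ T.image (· + 1) := by simp
    refine ⟨⟨?_, ?_⟩, Finset.mem_insert_self _ _⟩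
    · intro x hx
      simp only [Finset.mem_insert, Finset.mem_image] at hx
      rw [Finset.mem_range]
      rcases hx with rfl | ⟨y, hy, rfl⟩
      · omega
      · have := Finset.mem_range.mp (hsub hy)
        omega
    · rw [Finset.card_insert_of_notMem h0, Finset.card_image_of_injective _ (fun a b h => by simpa using h : Function.Injective (· + 1)), hcard]
      omega
  · intro S hS
    simp only [Finset.mem_filter, Finset.mem_powersetCard] at hS
    obtain ⟨⟨hsub, hcard⟩, h0⟩ := hS
    ext x
    simp only [Finset.mem_insert, Finset.mem_image, Finset.mem_erase]
    constructor
    · rintro (rfl | ⟨y, ⟨z, ⟨hz0, hzS⟩, rfl⟩, rfl⟩)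
      · exact h0
      · have : z - 1 + 1 = z := by omega
        rwa [this]
    · intro hx
      rcases Nat.eq_zero_or_pos x with rfl | hxpos
      · exact Or.inl rfl
      · exact Or.inr ⟨x - 1, ⟨x, ⟨by omega, hx⟩, rfl⟩, by omega⟩
  · intro T hT
    rw [Finset.mem_powersetCard] at hT
    have h0 : (0 : ℕ) ∉ T.image (· + 1) := by simp
    rw [Finset.erase_insert h0, Finset.image_image]
    ext x
    simp only [Finset.mem_image, Function.comp]
    constructor
    · rintro ⟨y, hy, rfl⟩; simpa using hy
    · intro hx; exact ⟨x, hx, by omega⟩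
  · intro S hS
    simp only [Finset.mem_filter, Finset.mem_powersetCard] at hS
    obtain ⟨⟨hsub, hcard⟩, h0⟩ := hS
    congr 1
    have hinj : Set.InjOn (· - 1) (S.erase 0 : Set ℕ) := by
      intro a ha b hb hab
      simp only [Finset.mem_coe, Finset.mem_erase] at ha hb
      simp only at hab
      omega
    rw [Finset.sum_image hinj]
    have h1 : ∀ x ∈ S.erase 0, q ^ (x - 1) * q = q ^ x := by
      intro x hx
      have := (Finset.mem_erase.mp hx).1
      rw [← pow_succ]
      congr 1
      omega
    rw [Finset.sum_mul, Finset.sum_congr rfl h1]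
    rw [← Finset.add_sum_erase _ _ h0, pow_zero]
    simp
end

section
/- Let 1 ≤ i ≤ n and let α be a root of s_{n,i}(t) in an algebraic closure of F_p, of multiplicity m with gcd(m, p) = 1. Then α lies in the field with q^n elements, i.e. α^{q^n} = α. -/
open Polynomial

open Finset in
lemma snq_frob {R : Type*} [CommRing R] (p e : ℕ) [Fact p.Prime] [CharP R p]
    (n i : ℕ) (hi1 : 1 ≤ i) (hin : i ≤ n) (hn : 2 ≤ n) :
    snq (p ^ e) n i R ^ p ^ e
      = snq (p ^ e) n i R + (X ^ (p ^ e) ^ n - X) * snq (p ^ e) (n - 1) (i - 1) R ^ p ^ e := by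
  set q := p ^ e with hq
  have hfrob : ∀ N I : ℕ, snq q N I R ^ q
      = ∑ S ∈ powersetCard I (range N), (X : R[X]) ^ (q * ∑ j ∈ S, q ^ j) := by
    intro N I
    rw [snq, hq, sum_pow_char_pow]
    exact Finset.sum_congr rfl fun S _ => by rw [← pow_mul, ← hq, mul_comm]
  rw [hfrob, hfrob, snq]
  have hinj : Function.Injective (· + 1 : ℕ → ℕ) := fun a b h => by
    have h' : a + 1 = b + 1 := h; omega
  have hmul : ∀ S : Finset ℕ, q * ∑ j ∈ S, q ^ j = ∑ j ∈ S.image (· + 1), q ^ j := by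
    intro S
    rw [Finset.sum_image (fun a _ b _ h => hinj h), Finset.mul_sum]
    exact Finset.sum_congr rfl fun j _ => by rw [pow_succ, mul_comm]
  have hleft : ∀ S : Finset ℕ, (S.image (· + 1)).image (· - 1) = S := by
    intro S
    rw [Finset.image_image]
    ext x
    simp only [Finset.mem_image, Function.comp_apply]
    constructor
    · rintro ⟨y, hy, rfl⟩
      simpa using hy
    · intro hx; exact ⟨x, hx, by omega⟩
  have hright : ∀ T : Finset ℕ, 0 ∉ T → (T.image (· - 1)).image (· + 1) = T := by
    intro T h0
    rw [Finset.image_image]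
    ext x
    simp only [Finset.mem_image, Function.comp_apply]
    constructor
    · rintro ⟨y, hy, rfl⟩
      have : y ≠ 0 := fun h => h0 (h ▸ hy)
      have hy1 : y - 1 + 1 = y := by omega
      rwa [hy1]
    · intro hx
      have : x ≠ 0 := fun h => h0 (h ▸ hx)
      exact ⟨x, hx, by omega⟩
  have hinjOn : ∀ T : Finset ℕ, 0 ∉ T → Set.InjOn (· - 1) T := by
    intro T h0 a ha b hb h
    have h' : a - 1 = b - 1 := h
    have : a ≠ 0 := fun h => h0 (h ▸ ha)
    have : b ≠ 0 := fun h => h0 (h ▸ hb)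
    omega
  have himgmem : ∀ (S : Finset ℕ) (N : ℕ), S ⊆ range N →
      ∀ x ∈ S.image (· + 1), 1 ≤ x ∧ x ≤ N := by
    intro S N hS x hx
    simp only [Finset.mem_image] at hx
    obtain ⟨y, hy, rfl⟩ := hx
    have := Finset.mem_range.mp (hS hy)
    omega
  set H := ∑ S ∈ powersetCard (i - 1) (range (n - 1)), (X : R[X]) ^ (q * ∑ j ∈ S, q ^ j) with hH
  have key : (∑ S ∈ powersetCard i (range n), (X : R[X]) ^ (q * ∑ j ∈ S, q ^ j)) + X * H
      = (∑ S ∈ powersetCard i (range n), (X : R[X]) ^ (∑ j ∈ S, q ^ j)) + X ^ q ^ n * H := by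
    have e1 : (∑ S ∈ powersetCard i (range n), (X : R[X]) ^ (q * ∑ j ∈ S, q ^ j))
        = ∑ T ∈ (powersetCard i (range (n + 1))).filter (fun T => 0 ∉ T),
            (X : R[X]) ^ (∑ j ∈ T, q ^ j) := by
      refine Finset.sum_nbij' (fun S => S.image (· + 1)) (fun T => T.image (· - 1))
        ?_ ?_ ?_ ?_ ?_
      · intro S hS
        rw [Finset.mem_powersetCard] at hS
        simp only [Finset.mem_filter, Finset.mem_powersetCard]
        refine ⟨⟨fun x hx => ?_, ?_⟩, ?_⟩
        · have := himgmem S n hS.1 x hx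
          simp only [Finset.mem_range]; omega
        · rw [Finset.card_image_of_injective _ hinj, hS.2]
        · intro h0
          have := himgmem S n hS.1 0 h0
          omega
      · intro T hT
        simp only [Finset.mem_filter, Finset.mem_powersetCard] at hT
        rw [Finset.mem_powersetCard]
        constructor
        · intro x hx
          simp only [Finset.mem_image] at hx
          obtain ⟨y, hy, rfl⟩ := hx
          have h1 := Finset.mem_range.mp (hT.1.1 hy)
          have h0 : y ≠ 0 := fun h => hT.2 (h ▸ hy)
          simp only [Finset.mem_range]; omega
        · rw [Finset.card_image_of_injOn (hinjOn T hT.2), hT.1.2]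
      · intro S _; exact hleft S
      · intro T hT
        simp only [Finset.mem_filter] at hT
        exact hright T hT.2
      · intro S _; rw [hmul]
    have e2 : (∑ S ∈ powersetCard i (range n), (X : R[X]) ^ (∑ j ∈ S, q ^ j))
        = ∑ T ∈ (powersetCard i (range (n + 1))).filter (fun T => n ∉ T),
            (X : R[X]) ^ (∑ j ∈ T, q ^ j) := by
      refine Finset.sum_nbij' id id ?_ ?_ (fun _ _ => rfl) (fun _ _ => rfl) (fun _ _ => rfl)
      · intro S hS
        rw [Finset.mem_powersetCard] at hS
        simp only [Finset.mem_filter, Finset.mem_powersetCard, id]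
        refine ⟨⟨fun x hx => ?_, hS.2⟩, fun hn' => ?_⟩
        · have := Finset.mem_range.mp (hS.1 hx)
          simp only [Finset.mem_range]; omega
        · have := Finset.mem_range.mp (hS.1 hn'); omega
      · intro T hT
        simp only [Finset.mem_filter, Finset.mem_powersetCard] at hT
        rw [Finset.mem_powersetCard, id]
        refine ⟨fun x hx => ?_, hT.1.2⟩
        have := Finset.mem_range.mp (hT.1.1 hx)
        have : x ≠ n := fun h => hT.2 (h ▸ hx)
        simp only [Finset.mem_range]; omega
    have e3 : X * H
        = ∑ T ∈ (powersetCard i (range (n + 1))).filter (fun T => 0 ∈ T ∧ n ∉ T),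
            (X : R[X]) ^ (∑ j ∈ T, q ^ j) := by
      rw [hH, Finset.mul_sum]
      have : ∀ a : ℕ, (X : R[X]) * X ^ a = X ^ (a + 1) := fun a => by
        rw [pow_succ, mul_comm]
      simp_rw [this]
      refine Finset.sum_nbij' (fun S => insert 0 (S.image (· + 1)))
        (fun T => (T.erase 0).image (· - 1)) ?_ ?_ ?_ ?_ ?_
      · intro S hS
        rw [Finset.mem_powersetCard] at hS
        have h0img : 0 ∉ S.image (· + 1) := fun h => by
          have := himgmem S (n - 1) hS.1 0 h; omega
        simp only [Finset.mem_filter, Finset.mem_powersetCard]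
        refine ⟨⟨?_, ?_⟩, Finset.mem_insert_self _ _, ?_⟩
        · intro x hx
          rcases Finset.mem_insert.mp hx with rfl | hx
          · simp only [Finset.mem_range]; omega
          · have := himgmem S (n - 1) hS.1 x hx
            simp only [Finset.mem_range]; omega
        · rw [Finset.card_insert_of_notMem h0img,
            Finset.card_image_of_injective _ hinj, hS.2]
          omega
        · intro hnmem
          rcases Finset.mem_insert.mp hnmem with h | h
          · omega
          · have := himgmem S (n - 1) hS.1 n h; omega
      · intro T hT
        simp only [Finset.mem_filter, Finset.mem_powersetCard] at hT
        rw [Finset.mem_powersetCard]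
        have h0e : 0 ∉ T.erase 0 := Finset.notMem_erase _ _
        constructor
        · intro x hx
          simp only [Finset.mem_image] at hx
          obtain ⟨y, hy, rfl⟩ := hx
          have hy0 : y ≠ 0 := Finset.ne_of_mem_erase hy
          have hyT := Finset.mem_of_mem_erase hy
          have h1 := Finset.mem_range.mp (hT.1.1 hyT)
          have hyn : y ≠ n := fun h => hT.2.2 (h ▸ hyT)
          simp only [Finset.mem_range]; omega
        · rw [Finset.card_image_of_injOn (hinjOn _ h0e),
            Finset.card_erase_of_mem hT.2.1, hT.1.2]
      · intro S hS
        rw [Finset.mem_powersetCard] at hS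
        have h0img : 0 ∉ S.image (· + 1) := fun h => by
          have := himgmem S (n - 1) hS.1 0 h; omega
        rw [Finset.erase_insert h0img, hleft]
      · intro T hT
        simp only [Finset.mem_filter] at hT
        rw [hright _ (Finset.notMem_erase _ _), Finset.insert_erase hT.2.1]
      · intro S hS
        rw [Finset.mem_powersetCard] at hS
        have h0img : 0 ∉ S.image (· + 1) := fun h => by
          have := himgmem S (n - 1) hS.1 0 h; omega
        rw [Finset.sum_insert h0img, ← hmul]
        simp [add_comm]
    have e4 : X ^ q ^ n * H
        = ∑ T ∈ (powersetCard i (range (n + 1))).filter (fun T => 0 ∉ T ∧ n ∈ T),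
            (X : R[X]) ^ (∑ j ∈ T, q ^ j) := by
      rw [hH, Finset.mul_sum]
      simp_rw [← pow_add]
      refine Finset.sum_nbij' (fun S => insert n (S.image (· + 1)))
        (fun T => (T.erase n).image (· - 1)) ?_ ?_ ?_ ?_ ?_
      · intro S hS
        rw [Finset.mem_powersetCard] at hS
        have hnimg : n ∉ S.image (· + 1) := fun h => by
          have := himgmem S (n - 1) hS.1 n h; omega
        simp only [Finset.mem_filter, Finset.mem_powersetCard]
        refine ⟨⟨?_, ?_⟩, ?_, Finset.mem_insert_self _ _⟩
        · intro x hx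
          rcases Finset.mem_insert.mp hx with rfl | hx
          · simp only [Finset.mem_range]; omega
          · have := himgmem S (n - 1) hS.1 x hx
            simp only [Finset.mem_range]; omega
        · rw [Finset.card_insert_of_notMem hnimg,
            Finset.card_image_of_injective _ hinj, hS.2]
          omega
        · intro h0mem
          rcases Finset.mem_insert.mp h0mem with h | h
          · omega
          · have := himgmem S (n - 1) hS.1 0 h; omega
      · intro T hT
        simp only [Finset.mem_filter, Finset.mem_powersetCard] at hT
        rw [Finset.mem_powersetCard]
        have hne : 0 ∉ T.erase n := fun h => hT.2.1 (Finset.mem_of_mem_erase h)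
        constructor
        · intro x hx
          simp only [Finset.mem_image] at hx
          obtain ⟨y, hy, rfl⟩ := hx
          have hy0 : y ≠ 0 := fun h => hT.2.1 (h ▸ Finset.mem_of_mem_erase hy)
          have hyn : y ≠ n := Finset.ne_of_mem_erase hy
          have h1 := Finset.mem_range.mp (hT.1.1 (Finset.mem_of_mem_erase hy))
          simp only [Finset.mem_range]; omega
        · rw [Finset.card_image_of_injOn (hinjOn _ hne),
            Finset.card_erase_of_mem hT.2.2, hT.1.2]
      · intro S hS
        rw [Finset.mem_powersetCard] at hS
        have hnimg : n ∉ S.image (· + 1) := fun h => by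
          have := himgmem S (n - 1) hS.1 n h; omega
        rw [Finset.erase_insert hnimg, hleft]
      · intro T hT
        simp only [Finset.mem_filter] at hT
        have hne : 0 ∉ T.erase n := fun h => hT.2.1 (Finset.mem_of_mem_erase h)
        rw [hright _ hne, Finset.insert_erase hT.2.2]
      · intro S hS
        rw [Finset.mem_powersetCard] at hS
        have hnimg : n ∉ S.image (· + 1) := fun h => by
          have := himgmem S (n - 1) hS.1 n h; omega
        rw [Finset.sum_insert hnimg, ← hmul]
    rw [e1, e2, e3, e4,
      Finset.sum_filter, Finset.sum_filter, Finset.sum_filter, Finset.sum_filter,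
      ← Finset.sum_add_distrib, ← Finset.sum_add_distrib]
    refine Finset.sum_congr rfl fun T _ => ?_
    by_cases h0 : 0 ∈ T <;> by_cases hn' : n ∈ T <;> simp [h0, hn']
  linear_combination key

theorem stmt_3 (p e n i q : ℕ) [Fact p.Prime] (he : 0 < e) (hn : 2 ≤ n)
    (hi1 : 1 ≤ i) (hin : i ≤ n) (hq : q = p ^ e)
    (α : AlgebraicClosure (ZMod p)) (m : ℕ)
    (hroot : (snq q n i (AlgebraicClosure (ZMod p))).eval α = 0)
    (hm : m = Polynomial.rootMultiplicity α (snq q n i (AlgebraicClosure (ZMod p))))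
    (hgcd : Nat.gcd m p = 1) :
    α ^ q ^ n = α := by
  subst hq
  by_contra hne
  have hp : p.Prime := Fact.out
  haveI : CharP (AlgebraicClosure (ZMod p)) p :=
    charP_of_injective_algebraMap (algebraMap (ZMod p) (AlgebraicClosure (ZMod p))).injective p
  set q := p ^ e with hqdef
  have hq2 : 2 ≤ q := by
    calc 2 ≤ p := hp.two_le
    _ ≤ p ^ e := Nat.le_self_pow (by omega) p
  set f := snq q n i (AlgebraicClosure (ZMod p)) with hf
  set g := snq q (n - 1) (i - 1) (AlgebraicClosure (ZMod p)) with hg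
  have key : f ^ q = f + (X ^ q ^ n - X) * g ^ q := snq_frob p e n i hi1 hin hn
  have hm0 : m ≠ 0 := by
    intro h
    rw [h, Nat.gcd_zero_left] at hgcd
    exact hp.one_lt.ne' hgcd
  have hf0 : f ≠ 0 := by
    intro h
    apply hm0
    rw [hm, h, rootMultiplicity_zero]
  have hm1 : 1 ≤ m := Nat.one_le_iff_ne_zero.mpr hm0
  obtain ⟨u, hfu, huα⟩ : ∃ u, (X - C α) ^ m * u = f ∧ eval α u ≠ 0 := by
    refine ⟨f /ₘ (X - C α) ^ m, ?_, ?_⟩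
    · conv_rhs => rw [← f.pow_mul_divByMonic_rootMultiplicity_eq α]
      rw [hm]
    · rw [hm]
      exact eval_divByMonic_pow_rootMultiplicity_ne_zero α hf0
  have hmle : m * 2 ≤ m * q := Nat.mul_le_mul_left m hq2
  have hmq : m + (m * q - m) = m * q := by omega
  set v := (X - C α) ^ (m * q - m) * u ^ q - u with hv
  have hDv : f ^ q - f = (X - C α) ^ m * v := by
    rw [hv, mul_sub, ← mul_assoc, ← pow_add, hmq, pow_mul, ← mul_pow, hfu]
  have hvα : eval α v ≠ 0 := by
    rw [hv]
    have h1 : m * q - m ≠ 0 := by omega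
    have : eval α ((X - C α) ^ (m * q - m) * u ^ q - u) = -eval α u := by
      simp [sub_self, zero_pow h1]
    rw [this]
    exact neg_ne_zero.mpr huα
  have hv0 : v ≠ 0 := fun h => by simp [h] at hvα
  have hD0 : f ^ q - f ≠ 0 := by
    rw [hDv]
    exact mul_ne_zero (pow_ne_zero _ (X_sub_C_ne_zero α)) hv0
  have multD : rootMultiplicity α (f ^ q - f) = m := by
    rw [hDv, rootMultiplicity_mul (hDv ▸ hD0), rootMultiplicity_X_sub_C_pow,
      rootMultiplicity_eq_zero hvα, add_zero]
  have hg0 : g ≠ 0 := by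
    intro h
    apply hD0
    rw [key, h, zero_pow (by omega : q ≠ 0), mul_zero, add_zero, sub_self]
  set k := rootMultiplicity α g with hk
  obtain ⟨w, hgw, hwα⟩ : ∃ w, (X - C α) ^ k * w = g ∧ eval α w ≠ 0 := by
    refine ⟨g /ₘ (X - C α) ^ k, ?_, ?_⟩
    · conv_rhs => rw [← g.pow_mul_divByMonic_rootMultiplicity_eq α]
    · exact eval_divByMonic_pow_rootMultiplicity_ne_zero α hg0
  have hDg : f ^ q - f = (X - C α) ^ (k * q) * ((X ^ q ^ n - X) * w ^ q) := by
    rw [key, add_sub_cancel_left, ← hgw, mul_pow, pow_mul]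
    ring
  have h2 : ¬((X ^ q ^ n - X) * w ^ q).IsRoot α := by
    simp only [IsRoot, eval_mul, eval_pow, eval_sub, eval_X]
    exact mul_ne_zero (sub_ne_zero.mpr hne) (pow_ne_zero _ hwα)
  have multD2 : rootMultiplicity α (f ^ q - f) = k * q := by
    rw [hDg, rootMultiplicity_mul (hDg ▸ hD0), rootMultiplicity_X_sub_C_pow,
      rootMultiplicity_eq_zero h2, add_zero]
  have hmkq : m = k * q := by rw [← multD, multD2]
  have hpd : p ∣ m := by
    rw [hmkq, hqdef]
    exact Dvd.dvd.mul_left (dvd_pow_self p (by omega : e ≠ 0)) k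
  have hp1 : p ∣ 1 := hgcd ▸ Nat.dvd_gcd hpd dvd_rfl
  exact absurd (Nat.dvd_one.mp hp1) hp.one_lt.ne'
end

section
/- Let 1 ≤ i ≤ n and let α be any root of s_{n,i}(t) in an algebraic closure of F_p. Then α lies in a field with q^k elements for some k with n − i + 1 ≤ k ≤ n; that is, α^{q^k} = α for some such k. -/
/-!
Put `x j = α ^ q ^ j`; this orbit of the `q`-Frobenius is periodic with exact period `d`, and
`s_{n,i}(α) = e_i(x 0, …, x (n - 1))` is the coefficient of `X ^ (n - i)` in the window
`∏_{j<n} (X + x (m + j))` for `m = 0`, hence for every `m` after applying Frobenius. Writing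
`n = s d + r`, each such window is `P ^ s` times a window of length `r`, `P` the product over a
full period. Since `x m ≠ x (m + r)` for `0 < r < d`, the difference of two consecutive windows of
length `r` is a nonzero multiple of a window of length `r - 1`, so `f ↦ coeff (P ^ s * f) (n - i)`
kills all windows of length at most `r`. If `i ≤ r`, the window of length `r - i` contradicts this,
since `P ^ s` times it is monic of degree `n - i`. Hence `r < i` and `k = s d` works.
-/

open Polynomial

open Function Finset Submodule

theorem Function.iterate_add_ne_of_lt_minimalPeriod {β : Type*} {f : β → β} {x : β} {m r : ℕ}
    (hr : 0 < r) (hrd : r < minimalPeriod f x) : f^[m + r] x ≠ f^[m] x := by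
  intro h
  have hd := hr.trans hrd
  rw [← iterate_mod_minimalPeriod_eq, ← iterate_mod_minimalPeriod_eq (n := m),
    iterate_eq_iterate_iff_of_lt_minimalPeriod (Nat.mod_lt _ hd) (Nat.mod_lt _ hd)] at h
  have : r ≡ 0 [MOD minimalPeriod f x] := Nat.ModEq.add_left_cancel' m h
  rw [Nat.ModEq, Nat.mod_eq_of_lt hrd, Nat.zero_mod] at this
  omega

namespace Polynomial

section WindowProd

variable {K : Type*} [Field K] (x : ℕ → K)

noncomputable def windowProd (m len : ℕ) : K[X] :=
  ∏ j ∈ range len, (X + C (x (m + j)))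

theorem monic_windowProd (m len : ℕ) : (windowProd x m len).Monic :=
  monic_prod_of_monic _ _ fun _ _ => monic_X_add_C _

theorem natDegree_windowProd (m len : ℕ) : (windowProd x m len).natDegree = len := by
  rw [windowProd, natDegree_prod_of_monic _ _ fun _ _ => monic_X_add_C _]
  simp

theorem windowProd_add (m a b : ℕ) :
    windowProd x m (a + b) = windowProd x m a * windowProd x (m + a) b := by
  simp only [windowProd, prod_range_add, add_assoc]

theorem windowProd_succ (m len : ℕ) :
    windowProd x m (len + 1) = (X + C (x m)) * windowProd x (m + 1) len := by
  rw [add_comm len, windowProd_add]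
  simp [windowProd]

theorem windowProd_succ' (m len : ℕ) :
    windowProd x m (len + 1) = windowProd x m len * (X + C (x (m + len))) :=
  prod_range_succ _ _

theorem windowProd_sub_windowProd_succ (m len : ℕ) :
    windowProd x m (len + 1) - windowProd x (m + 1) (len + 1) =
      C (x m - x (m + (len + 1))) * windowProd x (m + 1) len := by
  rw [windowProd_succ, windowProd_succ', C_sub, add_assoc, add_comm 1 len]
  ring

theorem coeff_windowProd_zero {n i : ℕ} (hin : i ≤ n) :
    (windowProd x 0 n).coeff (n - i) = ∑ S ∈ powersetCard i (range n), ∏ j ∈ S, x j := by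
  rw [windowProd, prod_X_add_C_coeff _ _ (by simp), card_range, Nat.sub_sub_self hin]
  simp

variable {x} {d : ℕ}

theorem windowProd_add_period (hper : Periodic x d) (m len : ℕ) :
    windowProd x (m + d) len = windowProd x m len :=
  prod_congr rfl fun j _ => by rw [add_right_comm, hper]

theorem windowProd_period (hper : Periodic x d) (m : ℕ) :
    windowProd x m d = windowProd x 0 d := by
  induction m with
  | zero => rfl
  | succ m ih =>
    have h := windowProd_succ x m d
    rw [windowProd_succ', hper m, mul_comm] at h
    rw [← ih, mul_left_cancel₀ (monic_X_add_C (x m)).ne_zero h]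

theorem windowProd_mul_period_add (hper : Periodic x d) (s r m : ℕ) :
    windowProd x m (s * d + r) = windowProd x 0 d ^ s * windowProd x m r := by
  induction s with
  | zero => simp
  | succ s ih =>
    rw [add_mul, one_mul, add_right_comm, add_comm, windowProd_add, windowProd_period hper,
      windowProd_add_period hper, ih, pow_succ]
    ring

theorem span_windowProd_le_succ (hper : Periodic x d)
    (hdist : ∀ m r, 0 < r → r < d → x (m + r) ≠ x m) {len : ℕ} (hlen : len + 1 < d) :
    span K (Set.range (windowProd x · len)) ≤ span K (Set.range (windowProd x · (len + 1))) := by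
  rw [span_le]
  rintro _ ⟨m, rfl⟩
  obtain ⟨m', hm'⟩ : ∃ m', m + d = m' + 1 := ⟨m + d - 1, by omega⟩
  have hc : x m' - x (m' + (len + 1)) ≠ 0 := sub_ne_zero.mpr (hdist m' _ (by omega) hlen).symm
  have h : windowProd x m len = (x m' - x (m' + (len + 1)))⁻¹ •
      (windowProd x m' (len + 1) - windowProd x (m' + 1) (len + 1)) := by
    rw [windowProd_sub_windowProd_succ, smul_eq_C_mul, ← mul_assoc, ← C_mul, inv_mul_cancel₀ hc,
      C_1, one_mul, ← hm', windowProd_add_period hper]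
  dsimp only
  rw [SetLike.mem_coe, h]
  exact smul_mem _ _ (sub_mem (subset_span ⟨_, rfl⟩) (subset_span ⟨_, rfl⟩))

theorem span_windowProd_mono (hper : Periodic x d)
    (hdist : ∀ m r, 0 < r → r < d → x (m + r) ≠ x m) {a b : ℕ} (hab : a ≤ b) (hbd : b < d) :
    span K (Set.range (windowProd x · a)) ≤ span K (Set.range (windowProd x · b)) := by
  induction b, hab using Nat.le_induction with
  | base => rfl
  | succ b _ ih => exact (ih (by omega)).trans (span_windowProd_le_succ hper hdist hbd)

theorem mod_lt_of_coeff_windowProd_eq_zero (hper : Periodic x d)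
    (hdist : ∀ m r, 0 < r → r < d → x (m + r) ≠ x m) (hd : 0 < d) {n i : ℕ} (hin : i ≤ n)
    (h : ∀ m, (windowProd x m n).coeff (n - i) = 0) : n % d < i := by
  by_contra! hi
  set P := windowProd x 0 d ^ (n / d)
  let L : K[X] →ₗ[K] K := (lcoeff K (n - i)).comp (LinearMap.mulLeft K P)
  have hL : span K (Set.range (windowProd x · (n % d))) ≤ LinearMap.ker L := by
    rw [span_le]
    rintro _ ⟨m, rfl⟩
    simpa [L, P, ← windowProd_mul_period_add hper, Nat.div_add_mod'] using h m
  have hmonic : (P * windowProd x 0 (n % d - i)).Monic :=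
    ((monic_windowProd x 0 d).pow _).mul (monic_windowProd x 0 _)
  have hdeg : (P * windowProd x 0 (n % d - i)).natDegree = n - i := by
    rw [((monic_windowProd x 0 d).pow _).natDegree_mul (monic_windowProd x 0 _), natDegree_pow,
      natDegree_windowProd, natDegree_windowProd]
    have := Nat.div_add_mod' n d
    omega
  have hmem := span_windowProd_mono hper hdist (Nat.sub_le (n % d) i) (Nat.mod_lt n hd)
    (subset_span ⟨0, rfl⟩)
  have := hL hmem
  rw [LinearMap.mem_ker] at this
  simp [L, ← hdeg, hmonic.coeff_natDegree] at this

end WindowProd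

section Orbit

variable {K : Type*} [Field K] (φ : K →+* K) (α : K)

theorem windowProd_iterate_succ (m len : ℕ) :
    windowProd (φ^[·] α) (m + 1) len = (windowProd (φ^[·] α) m len).map φ := by
  simp only [windowProd, Polynomial.map_prod, Polynomial.map_add, map_X, map_C, add_right_comm m 1,
    iterate_succ_apply']

theorem coeff_windowProd_iterate (m len k : ℕ) :
    (windowProd (φ^[·] α) m len).coeff k = φ^[m] ((windowProd (φ^[·] α) 0 len).coeff k) := by
  induction m with
  | zero => rfl
  | succ m ih => rw [windowProd_iterate_succ, coeff_map, ih, iterate_succ_apply']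

end Orbit

end Polynomial

theorem mod_minimalPeriod_lt_of_esymm_iterate_eq_zero {K : Type*} [Field K] {φ : K →+* K} {α : K}
    (hα : α ∈ periodicPts φ) {n i : ℕ} (hin : i ≤ n)
    (h : ∑ S ∈ powersetCard i (range n), ∏ j ∈ S, φ^[j] α = 0) :
    n % minimalPeriod φ α < i :=
  Polynomial.mod_lt_of_coeff_windowProd_eq_zero (x := (φ^[·] α))
    (fun _ => iterate_add_minimalPeriod_eq)
    (fun _ _ hr hrd => iterate_add_ne_of_lt_minimalPeriod hr hrd)
    (minimalPeriod_pos_of_mem_periodicPts hα) hin fun m => by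
      rw [Polynomial.coeff_windowProd_iterate, Polynomial.coeff_windowProd_zero _ hin, h,
        iterate_map_zero]

theorem IsIntegral.exists_pow_pow_eq_self {F L : Type*} [Field F] [Fintype F] [Field L]
    [Algebra F L] {α : L} (hα : IsIntegral F α) (e : ℕ) :
    ∃ k, 0 < k ∧ α ^ (Fintype.card F ^ e) ^ k = α := by
  let E := IntermediateField.adjoin F {α}
  have : FiniteDimensional F E := IntermediateField.adjoin.finiteDimensional hα
  have : Finite E := Module.finite_of_finite F
  let : Fintype E := Fintype.ofFinite E
  refine ⟨Module.finrank F E, Module.finrank_pos, ?_⟩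
  have h := FiniteField.pow_card_pow e (⟨α, IntermediateField.mem_adjoin_simple_self F α⟩ : E)
  rw [Module.card_eq_pow_finrank (K := F), ← pow_mul, mul_comm, pow_mul] at h
  exact congrArg Subtype.val h

theorem eval_snq {R : Type*} [CommRing R] (q n i : ℕ) (a : R) :
    (snq q n i R).eval a = ∑ S ∈ powersetCard i (range n), ∏ j ∈ S, a ^ q ^ j := by
  simp [snq, eval_finsetSum, prod_pow_eq_pow_sum]

theorem stmt_4_general (p e n i q : ℕ) [Fact p.Prime] (hin : i ≤ n) (hq : q = p ^ e)
    (α : AlgebraicClosure (ZMod p))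
    (hroot : (snq q n i (AlgebraicClosure (ZMod p))).eval α = 0) :
    ∃ k, n - i + 1 ≤ k ∧ k ≤ n ∧ α ^ q ^ k = α := by
  set φ := iterateFrobenius (AlgebraicClosure (ZMod p)) p e
  have hφ (j : ℕ) (a : AlgebraicClosure (ZMod p)) : φ^[j] a = a ^ q ^ j := by
    rw [hq, show ⇑φ = (· ^ p ^ e) from funext (iterateFrobenius_def p e), pow_iterate]
  have hα : α ∈ periodicPts φ := by
    obtain ⟨k, hk, hαk⟩ := (Algebra.IsIntegral.isIntegral (R := ZMod p) α).exists_pow_pow_eq_self e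
    rw [ZMod.card, ← hq, ← hφ] at hαk
    exact ⟨k, hk, hαk⟩
  set d := minimalPeriod φ α
  have hlt : n % d < i :=
    mod_minimalPeriod_lt_of_esymm_iterate_eq_zero hα hin (by simpa [hφ, eval_snq] using hroot)
  refine ⟨d * (n / d), by have := Nat.div_add_mod n d; omega, Nat.mul_div_le n d, ?_⟩
  rw [← hφ]
  exact (isPeriodicPt_minimalPeriod φ α).mul_const _

theorem stmt_4 (p e n i q : ℕ) [Fact p.Prime] (he : 0 < e) (hn : 2 ≤ n)
    (hi1 : 1 ≤ i) (hin : i ≤ n) (hq : q = p ^ e)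
    (α : AlgebraicClosure (ZMod p))
    (hroot : (snq q n i (AlgebraicClosure (ZMod p))).eval α = 0) :
    ∃ k, n - i + 1 ≤ k ∧ k ≤ n ∧ α ^ q ^ k = α :=
  stmt_4_general p e n i q hin hq α hroot
end

section
/- Let m ≥ 1 with gcd(m, n) = 1 and suppose p does not divide n. Let F be a field with q^m elements. Then the map F → F given by γ ↦ s_{n,1}(γ) = γ + γ^q + γ^{q^2} + … + γ^{q^{n−1}} is a bijection of F onto itself. -/
open Polynomial

theorem stmt_7 (p e n m q : ℕ) (hp : p.Prime) (he : 0 < e) (hn : 2 ≤ n)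
    (hm : 1 ≤ m) (hgcd : Nat.gcd m n = 1) (hpn : ¬ p ∣ n) (hq : q = p ^ e)
    (F : Type*) [Field F] (hF : Nat.card F = q ^ m) :
    Function.Bijective (fun γ : F => ∑ j ∈ Finset.range n, γ ^ q ^ j) := by
  subst hq
  haveI : Fact p.Prime := ⟨hp⟩
  have hcard0 : Nat.card F ≠ 0 := by
    rw [hF]
    exact (pow_pos (pow_pos hp.pos e) m).ne'
  haveI : Finite F := Nat.finite_of_card_ne_zero hcard0
  haveI : Fintype F := Fintype.ofFinite F
  have hFc : Fintype.card F = p ^ (e * m) := by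
    rw [← Nat.card_eq_fintype_card, hF, ← pow_mul]
  haveI hCh : CharP F p := by
    have h0 : ((p ^ (e * m) : ℕ) : F) = 0 := by
      rw [← hFc]; exact FiniteField.cast_card_eq_zero F
    have hprime : (ringChar F).Prime := CharP.char_is_prime F (ringChar F)
    have hdvd : ringChar F ∣ p ^ (e * m) :=
      (CharP.cast_eq_zero_iff F (ringChar F) _).mp h0
    have heq : ringChar F = p :=
      (Nat.prime_dvd_prime_iff_eq hprime hp).mp (hprime.dvd_of_dvd_pow hdvd)
    exact heq ▸ ringChar.charP F
  -- helper lemmas about iterated Frobenius powers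
  have hpow_add : ∀ (x : F) (i j : ℕ), (x ^ p ^ (e * i)) ^ p ^ (e * j) = x ^ p ^ (e * (i + j)) := by
    intro x i j
    rw [← pow_mul, ← pow_add, ← Nat.mul_add]
  have hfix : ∀ x : F, x ^ p ^ (e * m) = x := by
    intro x; rw [← hFc]; exact FiniteField.pow_card x
  have hfixt : ∀ (t : ℕ) (x : F), x ^ p ^ (e * (t * m)) = x := by
    intro t
    induction t with
    | zero => intro x; simp
    | succ t ih =>
      intro x
      have h1 : e * ((t + 1) * m) = e * (t * m) + e * m := by ring
      rw [h1, pow_add, pow_mul, ih x, hfix x]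
  -- the kernel of the trace-like map is trivial
  have hker : ∀ γ : F, (∑ j ∈ Finset.range n, γ ^ p ^ (e * j)) = 0 → γ = 0 := by
    intro γ h
    set g : ℕ → F := fun j => γ ^ p ^ (e * j) with hg
    set Tr : F := ∑ j ∈ Finset.range m, g j with hTr
    -- Tr is fixed by the q-Frobenius
    have hTr_fix : Tr ^ p ^ (e * 1) = Tr := by
      have h1 : Tr ^ p ^ (e * 1) = ∑ j ∈ Finset.range m, g (j + 1) := by
        rw [hTr, sum_pow_char_pow]
        exact Finset.sum_congr rfl fun j _ => hpow_add γ j 1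
      have hgm : g m = g 0 := by
        simp only [hg, Nat.mul_zero, pow_zero, pow_one]
        exact hfix γ
      have h2 : ∑ j ∈ Finset.range (m + 1), g j = (∑ j ∈ Finset.range m, g (j + 1)) + g 0 :=
        Finset.sum_range_succ' g m
      have h3 : ∑ j ∈ Finset.range (m + 1), g j = (∑ j ∈ Finset.range m, g j) + g m :=
        Finset.sum_range_succ g m
      rw [h1]
      have := h2.symm.trans h3
      rw [hgm] at this
      exact add_right_cancel this
    have hTr_fixi : ∀ i : ℕ, Tr ^ p ^ (e * i) = Tr := by
      intro i
      induction i with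
      | zero => simp
      | succ i ih =>
        have h1 : e * (i + 1) = e * i + e * 1 := by ring
        rw [h1, pow_add, pow_mul, ih, hTr_fix]
    -- n • Tr = 0, hence Tr = 0
    have hnTr : (n : F) * Tr = 0 := by
      have h0 : ∑ j ∈ Finset.range m, (∑ i ∈ Finset.range n, g i) ^ p ^ (e * j) = 0 := by
        rw [h]
        exact Finset.sum_eq_zero fun j _ => zero_pow (pow_ne_zero _ hp.ne_zero)
      have h1 : ∀ j, (∑ i ∈ Finset.range n, g i) ^ p ^ (e * j) =
          ∑ i ∈ Finset.range n, γ ^ p ^ (e * (i + j)) := by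
        intro j
        rw [sum_pow_char_pow]
        exact Finset.sum_congr rfl fun i _ => hpow_add γ i j
      have h2 : ∑ j ∈ Finset.range m, ∑ i ∈ Finset.range n, γ ^ p ^ (e * (i + j)) =
          ∑ i ∈ Finset.range n, Tr ^ p ^ (e * i) := by
        rw [Finset.sum_comm]
        refine Finset.sum_congr rfl fun i _ => ?_
        rw [hTr, sum_pow_char_pow]
        refine Finset.sum_congr rfl fun j _ => ?_
        rw [hpow_add γ j i, Nat.add_comm j i]
      have h3 : ∑ i ∈ Finset.range n, Tr ^ p ^ (e * i) = (n : F) * Tr := by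
        rw [Finset.sum_congr rfl fun i _ => hTr_fixi i]
        simp [Finset.sum_const, nsmul_eq_mul]
      rw [← h3, ← h2]
      rw [← h0]
      exact Finset.sum_congr rfl fun j _ => (h1 j).symm
    have hTr0 : Tr = 0 := by
      have hne : (n : F) ≠ 0 := fun hc => hpn ((CharP.cast_eq_zero_iff F p n).mp hc)
      exact (mul_eq_zero.mp hnTr).resolve_left hne
    -- sums over blocks of length n vanish
    have hblockn : ∀ a : ℕ, ∑ j ∈ Finset.range (a * n), g j = 0 := by
      intro a
      induction a with
      | zero => simp
      | succ a ih =>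
        have h1 : (a + 1) * n = a * n + n := by ring
        rw [h1, Finset.sum_range_add, ih, zero_add]
        have h2 : ∑ i ∈ Finset.range n, g (a * n + i) =
            (∑ i ∈ Finset.range n, g i) ^ p ^ (e * (a * n)) := by
          rw [sum_pow_char_pow]
          refine Finset.sum_congr rfl fun i _ => ?_
          rw [hg]
          rw [hpow_add γ i (a * n), Nat.add_comm i (a * n)]
        rw [h2, h, zero_pow (pow_ne_zero _ hp.ne_zero)]
    -- sums over blocks of length m vanish too
    have hblockm : ∀ c : ℕ, ∑ j ∈ Finset.range (c * m), g j = 0 := by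
      intro c
      induction c with
      | zero => simp
      | succ c ih =>
        have h1 : (c + 1) * m = c * m + m := by ring
        rw [h1, Finset.sum_range_add, ih, zero_add]
        have h2 : ∑ i ∈ Finset.range m, g (c * m + i) =
            Tr ^ p ^ (e * (c * m)) := by
          rw [hTr, sum_pow_char_pow]
          refine Finset.sum_congr rfl fun i _ => ?_
          rw [hg]
          rw [hpow_add γ i (c * m), Nat.add_comm i (c * m)]
        rw [h2, hTr0, zero_pow (pow_ne_zero _ hp.ne_zero)]
    -- find a, c with a * n = c * m + 1
    obtain ⟨a, c, hac⟩ : ∃ a c : ℕ, a * n = c * m + 1 := by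
      rcases eq_or_lt_of_le hm with hm1 | hm2
      · cases hm1
        exact ⟨1, n - 1, by omega⟩
      · have hcop : Nat.Coprime n m := (Nat.coprime_comm.mp hgcd)
        obtain ⟨b, -, hb⟩ := Nat.exists_mul_mod_eq_one_of_coprime hcop hm2
        refine ⟨b, n * b / m, ?_⟩
        have := Nat.div_add_mod (n * b) m
        rw [mul_comm b n, mul_comm (n * b / m) m]
        omega
    have hfinal : ∑ j ∈ Finset.range (a * n), g j = γ := by
      rw [hac, Finset.sum_range_succ, hblockm c, zero_add, hg]
      exact hfixt c γ
    rw [hblockn a] at hfinal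
    exact hfinal.symm
  -- conclude injectivity, hence bijectivity
  have hinj : Function.Injective (fun γ : F => ∑ j ∈ Finset.range n, γ ^ (p ^ e) ^ j) := by
    intro γ1 γ2 hEq
    simp only at hEq
    have hsub : ∑ j ∈ Finset.range n, (γ1 - γ2) ^ p ^ (e * j) = 0 := by
      have : ∀ j, (γ1 - γ2) ^ p ^ (e * j) = γ1 ^ p ^ (e * j) - γ2 ^ p ^ (e * j) := by
        intro j; exact sub_pow_char_pow γ1 γ2 (e * j)
      rw [Finset.sum_congr rfl fun j _ => this j, Finset.sum_sub_distrib]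
      simp only [← pow_mul] at hEq
      rw [hEq, sub_self]
    have := hker (γ1 - γ2) hsub
    exact sub_eq_zero.mp this
  exact Finite.injective_iff_bijective.mp hinj
end

section
/- Let k be an algebraic closure of F_p, let V be a finite subgroup of the additive group of k, and set L_V(T) = Π_{v ∈ V} (T − v), a separable F_p-linear polynomial of degree |V|. Let f(x) ∈ k[x] and put h(T, x) = L_V(T) − f(x), viewed as an element of the polynomial ring k[x][T]. Then h(T, x) is reducible (i.e. not irreducible) in k[x][T] if and only if there exist a polynomial g(x) ∈ k[x] and a proper additive subgroup W of V such that f(x) = L_{W'}(g(x)), where W' = L_W(V) is the image of V under the map L_W and L_{W'}(T) = Π_{w ∈ W'} (T − w). -/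
open Polynomial

open scoped Classical

/-- `L_V(T) = Π_{v ∈ V} (T − v)`. -/
noncomputable def LV {k : Type*} [Field k] (V : Finset k) : Polynomial k :=
  ∏ v ∈ V, (X - C v)

/-- `V` is (the underlying finset of) a finite subgroup of the additive group of `k`. -/
def IsFinAddSubgroup {k : Type*} [Field k] (V : Finset k) : Prop :=
  (0 : k) ∈ V ∧ (∀ a ∈ V, ∀ b ∈ V, a + b ∈ V) ∧ (∀ a ∈ V, -a ∈ V)

section General
variable {F : Type*} [Field F] {A : Type*} [CommRing A]

lemma IsFinAddSubgroup.sub_mem {V : Finset F} (hV : IsFinAddSubgroup V)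
    {a b : F} (ha : a ∈ V) (hb : b ∈ V) : a - b ∈ V := by
  rw [sub_eq_add_neg]; exact hV.2.1 a ha (-b) (hV.2.2 b hb)

lemma LV_monic (V : Finset F) : (LV V).Monic :=
  monic_prod_of_monic _ _ fun v _ => monic_X_sub_C v

lemma LV_natDegree (V : Finset F) : (LV V).natDegree = V.card := by
  rw [LV, natDegree_prod _ _ (fun v _ => X_sub_C_ne_zero v)]
  simp [natDegree_X_sub_C]

lemma eval₂_LV (φ : F →+* A) (a : A) (V : Finset F) :
    eval₂ φ a (LV V) = ∏ v ∈ V, (a - φ v) := by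
  rw [LV, eval₂_finset_prod]
  simp

lemma eval_LV (a : F) (V : Finset F) : (LV V).eval a = ∏ v ∈ V, (a - v) := by
  rw [eval, eval₂_LV]; simp

lemma eval_LV_eq_zero_iff {a : F} {V : Finset F} : (LV V).eval a = 0 ↔ a ∈ V := by
  rw [eval_LV, Finset.prod_eq_zero_iff]
  constructor
  · rintro ⟨v, hv, h⟩; rwa [sub_eq_zero.mp h]
  · intro h; exact ⟨a, h, by ring⟩

lemma prod_shift {V : Finset F} (hV : IsFinAddSubgroup V) (φ : F →+* A) (a : A)
    {v : F} (hv : v ∈ V) : ∏ u ∈ V, (a + φ v - φ u) = ∏ u ∈ V, (a - φ u) := by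
  refine Finset.prod_nbij (fun u => u - v) (fun u hu => hV.sub_mem hu hv) ?_ ?_ ?_
  · intro x hx y hy h; simpa using h
  · intro y hy
    refine ⟨y + v, hV.2.1 y hy v hv, by simp⟩
  · intro u hu
    rw [map_sub]
    ring

/-- The key two-variable additivity identity for `LV` of a finite subgroup. -/
lemma LV_two_var {V : Finset F} (hV : IsFinAddSubgroup V) :
    (∏ u ∈ V, (C (X : Polynomial F) + X - C (C u)))
      = C (LV V) + (LV V).map (C : F →+* Polynomial F) := by
  have hcard : 0 < V.card := Finset.card_pos.mpr ⟨0, hV.1⟩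
  set P1 : Polynomial (Polynomial F) := ∏ u ∈ V, (C (X : Polynomial F) + X - C (C u)) with hP1
  have hP1' : P1 = ∏ u ∈ V, (X - C (C u - X)) := by
    apply Finset.prod_congr rfl; intro u _; rw [map_sub]; ring
  have hP1monic : P1.Monic := by
    rw [hP1']; exact monic_prod_of_monic _ _ fun v _ => monic_X_sub_C _
  have hP1deg : P1.natDegree = V.card := by
    rw [hP1', natDegree_prod _ _ (fun v _ => X_sub_C_ne_zero _)]
    simp only [natDegree_X_sub_C, Finset.sum_const, smul_eq_mul, mul_one]
  have hmapmonic : ((LV V).map (C : F →+* Polynomial F)).Monic := (LV_monic V).map _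
  have hmapdeg : ((LV V).map (C : F →+* Polynomial F)).natDegree = V.card := by
    rw [(LV_monic V).natDegree_map, LV_natDegree]
  set D : Polynomial (Polynomial F) :=
    P1 - (C (LV V) + (LV V).map (C : F →+* Polynomial F)) with hD
  by_cases hD0 : D = 0
  · have := sub_eq_zero.mp hD0
    exact this
  · exfalso
    apply hD0
    apply eq_zero_of_natDegree_lt_card_of_eval_eq_zero' D (V.image (C : F → Polynomial F))
    · -- evaluation at C u₀ is zero
      intro y hy
      obtain ⟨u₀, hu₀, rfl⟩ := Finset.mem_image.mp hy
      have e1 : P1.eval (C u₀ : Polynomial F) = LV V := by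
        rw [hP1, eval_prod]
        have h : ∀ u ∈ V, ((C (X : Polynomial F) + X - C (C u)).eval (C u₀))
            = X + (C : F →+* Polynomial F) u₀ - (C : F →+* Polynomial F) u := by
          intro u _; simp
        rw [Finset.prod_congr rfl h, prod_shift hV (C : F →+* Polynomial F) (X : Polynomial F) hu₀]
        rfl
      have e2 : ((LV V).map (C : F →+* Polynomial F)).eval (C u₀ : Polynomial F) = 0 := by
        rw [eval_map, eval₂_at_apply, eval_LV_eq_zero_iff.mpr hu₀, map_zero]
      have e3 : (C (LV V) : Polynomial (Polynomial F)).eval (C u₀) = LV V := eval_C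
      rw [hD, eval_sub, eval_add, e1, e2, e3]
      ring
    · -- degree bound
      rw [Finset.card_image_of_injective _ C_injective]
      have hdlt : (P1 - (LV V).map (C : F →+* Polynomial F)).degree < (V.card : ℕ) := by
        have h1 : P1.degree = ((LV V).map (C : F →+* Polynomial F)).degree := by
          rw [degree_eq_natDegree hP1monic.ne_zero, degree_eq_natDegree hmapmonic.ne_zero,
            hP1deg, hmapdeg]
        have := degree_sub_lt h1 hP1monic.ne_zero
          (by rw [hP1monic.leadingCoeff, hmapmonic.leadingCoeff])
        rwa [degree_eq_natDegree hP1monic.ne_zero, hP1deg] at this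
      have hCdeg : (C (LV V) : Polynomial (Polynomial F)).degree < (V.card : ℕ) := by
        apply lt_of_le_of_lt (degree_C_le)
        exact_mod_cast hcard
      have : D = (P1 - (LV V).map (C : F →+* Polynomial F)) - C (LV V) := by rw [hD]; ring
      rw [natDegree_lt_iff_degree_lt hD0, this]
      exact lt_of_le_of_lt (degree_sub_le _ _) (max_lt hdlt hCdeg)

/-- Master additivity: `L_V` is an additive polynomial. -/
lemma eval₂_LV_add {V : Finset F} (hV : IsFinAddSubgroup V) (φ : F →+* A) (a b : A) :
    eval₂ φ (a + b) (LV V) = eval₂ φ a (LV V) + eval₂ φ b (LV V) := by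
  have key := LV_two_var hV
  have := congrArg (eval₂ (eval₂RingHom φ a) b) key
  rw [eval₂_finset_prod] at this
  have hC : (eval₂RingHom φ a).comp (C : F →+* Polynomial F) = φ :=
    RingHom.ext fun u => by simp
  have lhs : ∏ u ∈ V, (eval₂ (eval₂RingHom φ a) b (C (X : Polynomial F) + X - C (C u)))
      = ∏ u ∈ V, ((a + b) - φ u) := by
    apply Finset.prod_congr rfl; intro u _
    rw [eval₂_sub, eval₂_add, eval₂_C, eval₂_X, eval₂_C]
    simp
  have rhs1 : eval₂ (eval₂RingHom φ a) b (C (LV V)) = eval₂ φ a (LV V) := by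
    rw [eval₂_C]; rfl
  have rhs2 : eval₂ (eval₂RingHom φ a) b ((LV V).map (C : F →+* Polynomial F))
      = eval₂ φ b (LV V) := by
    rw [eval₂_map, hC]
  rw [lhs, eval₂_add, rhs1, rhs2, ← eval₂_LV φ (a + b) V] at this
  exact this

lemma eval₂_LV_zero {V : Finset F} (hV : IsFinAddSubgroup V) (φ : F →+* A) :
    eval₂ φ 0 (LV V) = 0 := by
  rw [eval₂_LV]
  exact Finset.prod_eq_zero hV.1 (by simp)

lemma eval₂_LV_neg {V : Finset F} (hV : IsFinAddSubgroup V) (φ : F →+* A) (a : A) :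
    eval₂ φ (-a) (LV V) = - eval₂ φ a (LV V) := by
  have := eval₂_LV_add hV φ a (-a)
  rw [add_neg_cancel, eval₂_LV_zero hV] at this
  exact eq_neg_of_add_eq_zero_right this.symm

lemma eval₂_LV_sub {V : Finset F} (hV : IsFinAddSubgroup V) (φ : F →+* A) (a b : A) :
    eval₂ φ (a - b) (LV V) = eval₂ φ a (LV V) - eval₂ φ b (LV V) := by
  rw [sub_eq_add_neg, eval₂_LV_add hV, eval₂_LV_neg hV, sub_eq_add_neg]

lemma eval_LV_add {V : Finset F} (hV : IsFinAddSubgroup V) (a b : F) :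
    (LV V).eval (a + b) = (LV V).eval a + (LV V).eval b := by
  simpa [eval₂_id] using eval₂_LV_add hV (RingHom.id F) a b

lemma eval_LV_sub {V : Finset F} (hV : IsFinAddSubgroup V) (a b : F) :
    (LV V).eval (a - b) = (LV V).eval a - (LV V).eval b := by
  simpa [eval₂_id] using eval₂_LV_sub hV (RingHom.id F) a b

lemma eval_LV_neg {V : Finset F} (hV : IsFinAddSubgroup V) (a : F) :
    (LV V).eval (-a) = - (LV V).eval a := by
  simpa [eval₂_id] using eval₂_LV_neg hV (RingHom.id F) a

/-- The image of a subgroup under an `L_W` map is a subgroup. -/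
lemma IsFinAddSubgroup.image {V W : Finset F} (hV : IsFinAddSubgroup V)
    (hW : IsFinAddSubgroup W) :
    IsFinAddSubgroup (V.image fun a => (LV W).eval a) := by
  refine ⟨?_, ?_, ?_⟩
  · exact Finset.mem_image.mpr ⟨0, hV.1, eval_LV_eq_zero_iff.mpr hW.1⟩
  · intro a ha b hb
    obtain ⟨x, hx, rfl⟩ := Finset.mem_image.mp ha
    obtain ⟨y, hy, rfl⟩ := Finset.mem_image.mp hb
    exact Finset.mem_image.mpr ⟨x + y, hV.2.1 x hx y hy, eval_LV_add hW x y⟩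
  · intro a ha
    obtain ⟨x, hx, rfl⟩ := Finset.mem_image.mp ha
    exact Finset.mem_image.mpr ⟨-x, hV.2.2 x hx, eval_LV_neg hW x⟩

/-- Composition formula : `L_{W'} ∘ L_W = L_V` where `W' = L_W(V)`. -/
lemma LV_comp {W V : Finset F} (hW : IsFinAddSubgroup W) (hV : IsFinAddSubgroup V)
    (hsub : W ⊆ V) :
    (LV (V.image fun a => (LV W).eval a)).comp (LV W) = LV V := by
  set e : F → F := fun a => (LV W).eval a with he
  rw [comp, eval₂_LV]
  have key : ∏ w' ∈ V.image e, ∏ v ∈ V.filter (fun v => e v = w'), ((X : Polynomial F) - C v)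
      = ∏ v ∈ V, ((X : Polynomial F) - C v) :=
    Finset.prod_fiberwise_of_maps_to (fun v hv => Finset.mem_image_of_mem e hv) _
  have hLV : LV V = ∏ v ∈ V, ((X : Polynomial F) - C v) := rfl
  rw [hLV, ← key]
  apply Finset.prod_congr rfl
  intro w' hw'
  obtain ⟨v₀, hv₀, hev₀⟩ := Finset.mem_image.mp hw'
  -- the fiber over w' is v₀ + W
  have hfiber : {v ∈ V | e v = w'} = W.image (fun w => v₀ + w) := by
    ext v
    simp only [Finset.mem_filter, Finset.mem_image]
    constructor
    · rintro ⟨hvV, hev⟩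
      refine ⟨v - v₀, ?_, by ring⟩
      rw [← eval_LV_eq_zero_iff (V := W)]
      have hev' : (LV W).eval v = w' := hev
      have hev₀' : (LV W).eval v₀ = w' := hev₀
      rw [eval_LV_sub hW v v₀, hev', hev₀', sub_self]
    · rintro ⟨w, hw, rfl⟩
      constructor
      · exact hV.2.1 v₀ hv₀ w (hsub hw)
      · show (LV W).eval (v₀ + w) = w'
        rw [eval_LV_add hW, eval_LV_eq_zero_iff.mpr hw, add_zero]
        exact hev₀
  rw [hfiber, Finset.prod_image (by intro x _ y _ h; simpa using h)]
  -- ∏_{w ∈ W} (X - C (v₀ + w)) = LV W - C w'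
  have : ∀ w ∈ W, (X : Polynomial F) - C (v₀ + w) = (X - C v₀) - C w := by
    intro w _; rw [map_add]; ring
  rw [Finset.prod_congr rfl this, ← eval₂_LV (C : F →+* Polynomial F) (X - C v₀) W,
    eval₂_LV_sub hW, eval₂_C_X, eval₂_at_apply, ← hev₀]

/-- Easy direction: if `f = L_{W'} ∘ g` then `L_V(T) - f` factors. -/
lemma not_irreducible_of_comp {V W : Finset F} (hV : IsFinAddSubgroup V)
    (hW : IsFinAddSubgroup W) (hWV : W ⊂ V) (g : Polynomial F) :
    ¬ Irreducible ((LV V).map (C : F →+* Polynomial F)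
        - C ((LV (V.image fun a => (LV W).eval a)).comp g)) := by
  set W' : Finset F := V.image fun a => (LV W).eval a with hW'def
  have hW' : IsFinAddSubgroup W' := hV.image hW
  set σ : Polynomial F →+* Polynomial (Polynomial F) := mapRingHom (C : F →+* Polynomial F)
    with hσ
  set φ : F →+* Polynomial (Polynomial F) := σ.comp (C : F →+* Polynomial F) with hφ
  set a : Polynomial (Polynomial F) := σ (LV W) - C g with ha
  -- the factorization
  have hfact : (LV V).map (C : F →+* Polynomial F) - C ((LV W').comp g)
      = ∏ w' ∈ W', (a - φ w') := by
    rw [← eval₂_LV φ a W', ha, eval₂_LV_sub hW' φ]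
    congr 1
    · have : φ = σ.comp (C : F →+* Polynomial F) := hφ
      rw [this, ← hom_eval₂ (LV W') (C : F →+* Polynomial F) σ (LV W)]
      rw [show eval₂ (C : F →+* Polynomial F) (LV W) (LV W') = (LV W').comp (LV W) from rfl]
      rw [LV_comp hW hV hWV.subset]
      rfl
    · have hφ2 : φ = (C : Polynomial F →+* Polynomial (Polynomial F)).comp
          (C : F →+* Polynomial F) := by
        ext r
        simp [hφ, hσ]
      rw [hφ2, ← hom_eval₂ (LV W') (C : F →+* Polynomial F)
        (C : Polynomial F →+* Polynomial (Polynomial F)) g]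
      rfl
  -- each factor is a non-unit
  have hfac_nonunit : ∀ w' : F, ¬ IsUnit (a - φ w') := by
    intro w'
    have h1 : a - φ w' = (LV W).map (C : F →+* Polynomial F) - C (g + C w') := by
      rw [ha, hφ, map_add]
      simp only [RingHom.comp_apply, hσ, coe_mapRingHom, map_C]
      ring
    have h2 : (a - φ w').natDegree = W.card := by
      rw [h1, natDegree_sub_C, (LV_monic W).natDegree_map, LV_natDegree]
    apply not_isUnit_of_natDegree_pos
    rw [h2]
    exact Finset.card_pos.mpr ⟨0, hW.1⟩
  -- W' has at least two elements
  have hcard : 1 < W'.card := by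
    obtain ⟨v, hvV, hvW⟩ := Finset.exists_of_ssubset hWV
    refine Finset.one_lt_card.mpr ⟨0, ?_, (LV W).eval v, ?_, ?_⟩
    · exact hW'.1
    · exact Finset.mem_image_of_mem _ hvV
    · intro h
      exact hvW (eval_LV_eq_zero_iff.mp h.symm)
  intro hirr
  rw [hfact] at hirr
  obtain ⟨w₀, hw₀, w₁, hw₁, hne⟩ := Finset.one_lt_card.mp hcard
  rw [← Finset.mul_prod_erase W' _ hw₀] at hirr
  rcases hirr.isUnit_or_isUnit rfl with h | h
  · exact hfac_nonunit w₀ h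
  · have hw₁' : w₁ ∈ W'.erase w₀ := Finset.mem_erase.mpr ⟨fun h => hne h.symm, hw₁⟩
    rw [← Finset.mul_prod_erase _ _ hw₁'] at h
    exact hfac_nonunit w₁ (isUnit_of_mul_isUnit_left h)

lemma isFinAddSubgroup_of_closure {p : ℕ} [Fact p.Prime] [CharP F p] {U : Finset F}
    (h0 : (0 : F) ∈ U) (hadd : ∀ a ∈ U, ∀ b ∈ U, a + b ∈ U) : IsFinAddSubgroup U := by
  refine ⟨h0, hadd, ?_⟩
  intro a ha
  have hn : ∀ n : ℕ, (n + 1) • a ∈ U := by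
    intro n
    induction n with
    | zero => simpa using ha
    | succ k ih =>
      have := hadd _ ih _ ha
      rwa [← succ_nsmul] at this
  have hp2 : 2 ≤ p := (Fact.out : p.Prime).two_le
  have hcast : ((p - 1 : ℕ) : F) = -1 := by
    have h1 : ((p : ℕ) : F) = 0 := CharP.cast_eq_zero F p
    rw [Nat.cast_sub (by omega : 1 ≤ p), h1]
    ring
  have key : (p - 1) • a = -a := by
    rw [nsmul_eq_mul, hcast]; ring
  have : p - 1 = (p - 2) + 1 := by omega
  rw [← key, this]
  exact hn _

set_option maxHeartbeats 1000000 in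
set_option synthInstance.maxHeartbeats 400000 in
lemma exists_of_not_irreducible (p : ℕ) [Fact p.Prime] [CharP F p]
    {V : Finset F} (hV : IsFinAddSubgroup V) (f : Polynomial F)
    (hH : ¬ Irreducible ((LV V).map (C : F →+* Polynomial F) - C f)) :
    ∃ (g : Polynomial F) (W : Finset F), IsFinAddSubgroup W ∧ W ⊂ V ∧
      f = (LV (V.image fun a => (LV W).eval a)).comp g := by
  set H : Polynomial (Polynomial F) := (LV V).map (C : F →+* Polynomial F) - C f with hHdef
  have hq0 : 0 < V.card := Finset.card_pos.mpr ⟨0, hV.1⟩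
  have hLVdeg : ((LV V).map (C : F →+* Polynomial F)).natDegree = V.card := by
    rw [(LV_monic V).natDegree_map, LV_natDegree]
  have hHmonic : H.Monic := by
    apply Monic.sub_of_left ((LV_monic V).map _)
    apply lt_of_le_of_lt (degree_C_le)
    rw [degree_eq_natDegree ((LV_monic V).map (C : F →+* Polynomial F)).ne_zero, hLVdeg]
    exact_mod_cast hq0
  have hHdeg : H.natDegree = V.card := by
    rw [hHdef, natDegree_sub_C, hLVdeg]
  -- pass to the fraction field
  set Hk : Polynomial (FractionRing (Polynomial F)) :=
    H.map (algebraMap (Polynomial F) (FractionRing (Polynomial F))) with hHk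
  have hKred : ¬ Irreducible Hk := fun h =>
    hH (hHmonic.irreducible_iff_irreducible_map_fraction_map.mpr h)
  have hHkmonic : Hk.Monic := hHmonic.map _
  have hHkdeg : Hk.natDegree = V.card := by rw [hHk, hHmonic.natDegree_map, hHdeg]
  -- pass to the algebraic closure
  set algΩ : FractionRing (Polynomial F) →+* AlgebraicClosure (FractionRing (Polynomial F)) :=
    algebraMap _ _ with halgΩ
  set ρ : Polynomial F →+* AlgebraicClosure (FractionRing (Polynomial F)) :=
    algΩ.comp (algebraMap (Polynomial F) (FractionRing (Polynomial F))) with hρ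
  set κ : F →+* FractionRing (Polynomial F) :=
    (algebraMap (Polynomial F) (FractionRing (Polynomial F))).comp (C : F →+* Polynomial F)
    with hκ
  set ι : F →+* AlgebraicClosure (FractionRing (Polynomial F)) := algΩ.comp κ with hι
  set G : Polynomial (AlgebraicClosure (FractionRing (Polynomial F))) := H.map ρ with hG
  have hGmk : G = Hk.map algΩ := by rw [hG, hHk, map_map]
  have hGmonic : G.Monic := hHmonic.map _
  have hGdeg : G.natDegree = V.card := by rw [hG, hHmonic.natDegree_map, hHdeg]
  have hGdef : G = (LV V).map ι - C (ρ f) := by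
    rw [hG, hHdef, Polynomial.map_sub, map_C, map_map]
    congr 2
  -- a root t₀ of G
  obtain ⟨t₀, ht₀⟩ : ∃ t₀ : AlgebraicClosure (FractionRing (Polynomial F)), G.eval t₀ = 0 := by
    obtain ⟨t₀, ht₀⟩ := IsAlgClosed.exists_root G (by
      rw [degree_eq_natDegree hGmonic.ne_zero, hGdeg]
      exact_mod_cast hq0.ne')
    exact ⟨t₀, ht₀⟩
  have hft₀ : eval₂ ι t₀ (LV V) = ρ f := by
    rw [hGdef] at ht₀
    rw [eval_sub, eval_C, eval_map, sub_eq_zero] at ht₀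
    exact ht₀
  -- the roots of G are exactly t₀ + ι v, v ∈ V
  have hroot : ∀ v ∈ V, G.eval (t₀ + ι v) = 0 := by
    intro v hv
    rw [hGdef, eval_sub, eval_C, eval_map, sub_eq_zero]
    rw [eval₂_LV_add hV ι t₀ (ι v), eval₂_at_apply, eval_LV_eq_zero_iff.mpr hv, map_zero,
      add_zero]
    exact hft₀
  set M : Multiset (AlgebraicClosure (FractionRing (Polynomial F))) :=
    V.val.map (fun v => t₀ + ι v) with hM
  have hMnodup : M.Nodup := by
    refine Multiset.Nodup.map ?_ V.nodup
    intro x y h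
    simp only [add_right_injective] at h
    exact ι.injective (by exact add_left_cancel h)
  have hMcard : Multiset.card M = V.card := by rw [hM, Multiset.card_map]; rfl
  have hGroots : G.roots = M := by
    have hle : M ≤ G.roots := by
      rw [Multiset.le_iff_subset hMnodup]
      intro a ha
      obtain ⟨v, hv, rfl⟩ := Multiset.mem_map.mp ha
      rw [mem_roots hGmonic.ne_zero]
      exact hroot v hv
    have hcard : Multiset.card G.roots ≤ Multiset.card M := by
      rw [hMcard, ← hGdeg]
      exact G.card_roots'
    exact (Multiset.eq_of_le_of_card_le hle hcard).symm
  -- the minimal polynomial of t₀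
  have haevalHk : (Polynomial.aeval t₀) Hk = 0 := by
    rw [aeval_def, eval₂_eq_eval_map, ← hGmk]
    exact ht₀
  have hint : IsIntegral (FractionRing (Polynomial F)) t₀ := ⟨Hk, hHkmonic, haevalHk⟩
  set m : Polynomial (FractionRing (Polynomial F)) := minpoly (FractionRing (Polynomial F)) t₀
    with hm
  have hmdvd : m ∣ Hk := minpoly.dvd _ t₀ haevalHk
  have hmmonic : m.Monic := minpoly.monic hint
  have hmirr : Irreducible m := minpoly.irreducible hint
  set mΩ : Polynomial (AlgebraicClosure (FractionRing (Polynomial F))) := m.map algΩ with hmΩ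
  have hmΩmonic : mΩ.Monic := hmmonic.map _
  have hmΩdvd : mΩ ∣ G := by rw [hGmk]; exact Polynomial.map_dvd _ hmdvd
  have hmrootsle : mΩ.roots ≤ G.roots := roots.le_of_dvd hGmonic.ne_zero hmΩdvd
  -- the subgroup U
  set U : Finset F := V.filter (fun v => (Polynomial.aeval (t₀ + ι v)) m = 0) with hU
  have hmemU : ∀ v : F, v ∈ U ↔ v ∈ V ∧ (Polynomial.aeval (t₀ + ι v)) m = 0 := by
    intro v; rw [hU, Finset.mem_filter]
  have haevalmΩ : ∀ a, (Polynomial.aeval a) m = mΩ.eval a := by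
    intro a; rw [aeval_def, eval₂_eq_eval_map]
  have hrootsmΩ : mΩ.roots = U.val.map (fun v => t₀ + ι v) := by
    have h1 : mΩ.roots.Nodup := Multiset.nodup_of_le (hGroots ▸ hmrootsle) hMnodup
    have h2 : (U.val.map (fun v => t₀ + ι v)).Nodup := by
      refine Multiset.Nodup.map ?_ U.nodup
      intro x y h
      exact ι.injective (add_left_cancel h)
    rw [Multiset.Nodup.ext h1 h2]
    intro a
    constructor
    · intro ha
      have haM : a ∈ M := by rw [← hGroots]; exact Multiset.mem_of_le hmrootsle ha
      obtain ⟨v, hv, rfl⟩ := Multiset.mem_map.mp haM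
      refine Multiset.mem_map.mpr ⟨v, ?_, rfl⟩
      have : mΩ.eval (t₀ + ι v) = 0 := (mem_roots hmΩmonic.ne_zero).mp ha
      rw [show (v ∈ U.val) = (v ∈ U) from rfl, hmemU]
      exact ⟨hv, by rw [haevalmΩ]; exact this⟩
    · intro ha
      obtain ⟨v, hv, rfl⟩ := Multiset.mem_map.mp ha
      have hv' := (hmemU v).mp hv
      rw [mem_roots hmΩmonic.ne_zero, IsRoot.def, ← haevalmΩ]
      exact hv'.2
  have hUsub : U ⊆ V := Finset.filter_subset _ _
  have hmΩprod : mΩ = ∏ u ∈ U, (X - C (t₀ + ι u)) := by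
    have hsplits := IsAlgClosed.splits mΩ
    have := hsplits.eq_prod_roots_of_monic hmΩmonic
    rw [hrootsmΩ, Multiset.map_map] at this
    rw [this, Finset.prod_eq_multiset_prod]
    rfl
  have hUcard : U.card = m.natDegree := by
    have : mΩ.natDegree = U.card := by
      rw [hmΩprod, natDegree_prod _ _ (fun u _ => X_sub_C_ne_zero _)]
      simp only [natDegree_X_sub_C, Finset.sum_const, smul_eq_mul, mul_one]
    rw [← hmmonic.natDegree_map algΩ, this]
  -- U is a subgroup
  haveI : Fact (Irreducible m) := ⟨hmirr⟩
  have h0U : (0 : F) ∈ U := by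
    rw [hmemU]
    refine ⟨hV.1, ?_⟩
    rw [map_zero, add_zero]
    exact minpoly.aeval _ _
  have hUadd : ∀ u ∈ U, ∀ v ∈ U, u + v ∈ U := by
    intro u hu v hv
    obtain ⟨huV, hum⟩ := (hmemU u).mp hu
    obtain ⟨hvV, hvm⟩ := (hmemU v).mp hv
    set φ₀ : AdjoinRoot m →ₐ[FractionRing (Polynomial F)]
        AlgebraicClosure (FractionRing (Polynomial F)) :=
      AdjoinRoot.liftAlgHom m (Algebra.ofId _ _) t₀
        (show eval₂ (Algebra.ofId (FractionRing (Polynomial F)) (AlgebraicClosure (FractionRing (Polynomial F))) : FractionRing (Polynomial F) →+* AlgebraicClosure (FractionRing (Polynomial F))) t₀ m = 0 from minpoly.aeval _ _) with hφ₀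
    set ψ : AdjoinRoot m →ₐ[FractionRing (Polynomial F)]
        AlgebraicClosure (FractionRing (Polynomial F)) :=
      AdjoinRoot.liftAlgHom m (Algebra.ofId _ _) (t₀ + ι v)
        (show eval₂ (Algebra.ofId (FractionRing (Polynomial F)) (AlgebraicClosure (FractionRing (Polynomial F))) : FractionRing (Polynomial F) →+* AlgebraicClosure (FractionRing (Polynomial F))) (t₀ + ι v) m = 0 from hvm) with hψ
    set z : AdjoinRoot m := AdjoinRoot.root m + algebraMap _ _ (κ u) with hz
    have hφ₀z : φ₀ z = t₀ + ι u := by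
      rw [hz, map_add, hφ₀, AdjoinRoot.liftAlgHom_root, AlgHom.commutes]
      rfl
    have hzm : (Polynomial.aeval z) m = 0 := by
      apply φ₀.toRingHom.injective
      rw [show φ₀.toRingHom ((Polynomial.aeval z) m) = φ₀ ((Polynomial.aeval z) m) from rfl]
      rw [← aeval_algHom_apply φ₀ z m, hφ₀z, hum, map_zero]
    have hψz : ψ z = t₀ + ι v + ι u := by
      rw [hz, map_add, hψ, AdjoinRoot.liftAlgHom_root, AlgHom.commutes]
      rfl
    have : (Polynomial.aeval (t₀ + ι v + ι u)) m = 0 := by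
      rw [← hψz, aeval_algHom_apply ψ z m, hzm, map_zero]
    rw [hmemU]
    refine ⟨hV.2.1 u huV v hvV, ?_⟩
    rw [show t₀ + ι (u + v) = t₀ + ι v + ι u by rw [map_add]; ring]
    exact this
  have hUgroup : IsFinAddSubgroup U := isFinAddSubgroup_of_closure (p := p) h0U hUadd
  -- U is a proper subset of V
  have hdlt : m.natDegree < V.card := by
    have hle : m.natDegree ≤ Hk.natDegree :=
      natDegree_le_of_dvd hmdvd hHkmonic.ne_zero
    rw [hHkdeg] at hle
    rcases lt_or_eq_of_le hle with h | h
    · exact h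
    · exfalso
      obtain ⟨c, hc⟩ := hmdvd
      have hc0 : c ≠ 0 := by
        intro h0; rw [h0, mul_zero] at hc; exact hHkmonic.ne_zero hc
      have hcdeg : c.natDegree = 0 := by
        have := natDegree_mul hmmonic.ne_zero hc0
        rw [← hc, hHkdeg, h] at this
        omega
      have hcC : c = C (c.coeff 0) := eq_C_of_natDegree_eq_zero hcdeg
      have hlc : c.coeff 0 = 1 := by
        have h1 : Hk.leadingCoeff = m.leadingCoeff * c.leadingCoeff := by
          rw [hc, leadingCoeff_mul]
        rw [hHkmonic.leadingCoeff, hmmonic.leadingCoeff, one_mul] at h1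
        rw [hcC, leadingCoeff_C] at h1
        exact h1.symm
      have : Hk = m := by rw [hc, hcC, hlc, map_one, mul_one]
      exact hKred (this ▸ hmirr)
  have hUV : U ⊂ V := by
    rw [Finset.ssubset_iff_subset_ne]
    refine ⟨hUsub, fun h => ?_⟩
    rw [h] at hUcard
    omega
  -- the constant term of the factor
  set cΩ : AlgebraicClosure (FractionRing (Polynomial F)) := eval₂ ι t₀ (LV U) with hcΩ
  have hmapι : (LV U).map ι = ∏ u ∈ U, (X - C (ι u)) := by
    rw [LV, Polynomial.map_prod]
    simp
  have hmΩc : mΩ = (LV U).map ι - C cΩ := by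
    rw [hmΩprod]
    have hterm : ∀ u ∈ U, (X : Polynomial (AlgebraicClosure (FractionRing (Polynomial F))))
        - C (t₀ + ι u)
        = (X - C t₀) - ((C : AlgebraicClosure (FractionRing (Polynomial F)) →+*
            Polynomial (AlgebraicClosure (FractionRing (Polynomial F)))).comp ι) u := by
      intro u _
      have h2 : ((C : AlgebraicClosure (FractionRing (Polynomial F)) →+*
          Polynomial (AlgebraicClosure (FractionRing (Polynomial F)))).comp ι) u
          = C (ι u) := rfl
      rw [h2, map_add]
      ring
    rw [Finset.prod_congr rfl hterm,
      ← eval₂_LV ((C : AlgebraicClosure (FractionRing (Polynomial F)) →+*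
          Polynomial (AlgebraicClosure (FractionRing (Polynomial F)))).comp ι) (X - C t₀) U,
      eval₂_LV_sub hUgroup]
    have g1 : eval₂ ((C : AlgebraicClosure (FractionRing (Polynomial F)) →+*
        Polynomial (AlgebraicClosure (FractionRing (Polynomial F)))).comp ι) X (LV U)
        = (LV U).map ι := by
      rw [eval₂_LV, hmapι]
      apply Finset.prod_congr rfl
      intro u _
      rfl
    have g2 : eval₂ ((C : AlgebraicClosure (FractionRing (Polynomial F)) →+*
        Polynomial (AlgebraicClosure (FractionRing (Polynomial F)))).comp ι) (C t₀) (LV U)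
        = C cΩ := by
      rw [hcΩ, hom_eval₂]
    rw [g1, g2]
  -- the constant term comes from K
  set m' : Polynomial (FractionRing (Polynomial F)) := (LV U).map κ - m with hm'
  have hm'map : m'.map algΩ = C cΩ := by
    rw [hm', Polynomial.map_sub, map_map, ← hι, ← hmΩ, hmΩc]
    ring
  have hm'deg : m'.natDegree = 0 := by
    rw [← natDegree_map_eq_of_injective algΩ.injective m', hm'map, natDegree_C]
  have hm'C : m' = C (m'.coeff 0) := eq_C_of_natDegree_eq_zero hm'deg
  set s : FractionRing (Polynomial F) := m'.coeff 0 with hs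
  have hsc : algΩ s = cΩ := by
    have h := congrArg (Polynomial.map algΩ) hm'C
    rw [hm'map, map_C] at h
    exact (C_injective h).symm
  -- the key evaluation identity
  set W' : Finset F := V.image (fun a => (LV U).eval a) with hW'
  have hW'group : IsFinAddSubgroup W' := hV.image hUgroup
  have hcomp : (LV W').comp (LV U) = LV V := LV_comp hUgroup hV hUV.subset
  have hkey : eval₂ κ s (LV W')
      = algebraMap (Polynomial F) (FractionRing (Polynomial F)) f := by
    apply algΩ.injective
    rw [hom_eval₂ (LV W') κ algΩ s, hsc, ← hι, hcΩ, ← eval₂_comp (f := ι), hcomp, hft₀, hρ]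
    rfl
  -- s is integral over F[x]
  have hW'0 : (0 : F) ∈ W' := hW'group.1
  have hQmonic : ((LV W').map (C : F →+* Polynomial F) - C f).Monic := by
    apply Monic.sub_of_left ((LV_monic W').map _)
    apply lt_of_le_of_lt (degree_C_le)
    rw [degree_eq_natDegree ((LV_monic W').map (C : F →+* Polynomial F)).ne_zero,
      (LV_monic W').natDegree_map, LV_natDegree]
    exact_mod_cast Finset.card_pos.mpr ⟨0, hW'0⟩
  have hsint : IsIntegral (Polynomial F) s := by
    refine ⟨(LV W').map (C : F →+* Polynomial F) - C f, hQmonic, ?_⟩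
    show (Polynomial.aeval s) ((LV W').map (C : F →+* Polynomial F) - C f) = 0
    rw [map_sub, aeval_C, aeval_def, eval₂_map, ← hκ, hkey, sub_self]
  obtain ⟨g₀, hg₀⟩ := IsIntegrallyClosed.isIntegral_iff.mp hsint
  refine ⟨g₀, U, hUgroup, hUV, ?_⟩
  apply IsFractionRing.injective (Polynomial F) (FractionRing (Polynomial F))
  have hcompg : algebraMap (Polynomial F) (FractionRing (Polynomial F)) ((LV W').comp g₀)
      = eval₂ κ (algebraMap (Polynomial F) (FractionRing (Polynomial F)) g₀) (LV W') := by
    rw [show (LV W').comp g₀ = eval₂ (C : F →+* Polynomial F) g₀ (LV W') from rfl,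
      hom_eval₂, hκ]
  rw [hcompg, hg₀, hkey]

end General

theorem stmt_8 (p : ℕ) [Fact p.Prime]
    (V : Finset (AlgebraicClosure (ZMod p))) (hV : IsFinAddSubgroup V)
    (f : Polynomial (AlgebraicClosure (ZMod p))) :
    ¬ Irreducible
        ((LV V).map (C : AlgebraicClosure (ZMod p) →+* Polynomial (AlgebraicClosure (ZMod p)))
          - C f) ↔
      ∃ (g : Polynomial (AlgebraicClosure (ZMod p)))
        (W : Finset (AlgebraicClosure (ZMod p))),
          IsFinAddSubgroup W ∧ W ⊂ V ∧
          f = (LV (V.image fun a => (LV W).eval a)).comp g := by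
  constructor
  · intro h
    exact exists_of_not_irreducible p hV f h
  · rintro ⟨g, W, hW, hWV, rfl⟩
    exact not_irreducible_of_comp hV hW hWV g
end

section
/- Let k be an algebraic closure of F_p and let 2 ≤ i ≤ n. Then the polynomial h(T, x) = T^{q^{n−1}} + T^{q^{n−2}} + … + T^q + T − s_{n,i}(x), viewed as an element of k[x][T], is irreducible (so the defining equation of the symmetric Artin–Schreier extension E_i is absolutely irreducible). -/
set_option maxHeartbeats 1000000

open Polynomial

section NatLemmas

lemma mygeom_le {q : ℕ} (hq : 2 ≤ q) (m : ℕ) : ∑ j ∈ Finset.range m, q ^ j ≤ q ^ m - 1 := by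
  induction m with
  | zero => simp
  | succ m ih =>
    rw [Finset.sum_range_succ]
    have h1 : 1 ≤ q ^ m := Nat.one_le_pow _ _ (by omega)
    have h2 : q ^ (m + 1) = q * q ^ m := by ring
    have : 2 * q ^ m ≤ q * q ^ m := Nat.mul_le_mul_right _ hq
    omega

lemma sum_pow_lt {q : ℕ} (hq : 2 ≤ q) {S : Finset ℕ} {m : ℕ} (hS : S ⊆ Finset.range m) :
    ∑ j ∈ S, q ^ j < q ^ m := by
  have h1 : ∑ j ∈ S, q ^ j ≤ ∑ j ∈ Finset.range m, q ^ j :=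
    Finset.sum_le_sum_of_subset hS
  have h2 := mygeom_le hq m
  have h3 : 1 ≤ q ^ m := Nat.one_le_pow _ _ (by omega)
  omega

lemma sum_pow_inj {q : ℕ} (hq : 2 ≤ q) (n : ℕ) :
    ∀ S T : Finset ℕ, S ⊆ Finset.range n → T ⊆ Finset.range n →
      (∑ j ∈ S, q ^ j) = (∑ j ∈ T, q ^ j) → S = T := by
  induction n with
  | zero =>
    intro S T hS hT _
    simp only [Finset.range_zero, Finset.subset_empty] at hS hT
    rw [hS, hT]
  | succ n ih =>
    intro S T hS hT hsum
    have hSe : S.erase n ⊆ Finset.range n := by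
      intro j hj
      have := hS (Finset.mem_of_mem_erase hj)
      have := Finset.ne_of_mem_erase hj
      simp only [Finset.mem_range] at *
      omega
    have hTe : T.erase n ⊆ Finset.range n := by
      intro j hj
      have := hT (Finset.mem_of_mem_erase hj)
      have := Finset.ne_of_mem_erase hj
      simp only [Finset.mem_range] at *
      omega
    by_cases hnS : n ∈ S <;> by_cases hnT : n ∈ T
    · have e1 : q ^ n + ∑ j ∈ S.erase n, q ^ j = ∑ j ∈ S, q ^ j :=
        Finset.add_sum_erase _ _ hnS
      have e2 : q ^ n + ∑ j ∈ T.erase n, q ^ j = ∑ j ∈ T, q ^ j :=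
        Finset.add_sum_erase _ _ hnT
      have : S.erase n = T.erase n := ih _ _ hSe hTe (by omega)
      have := congrArg (insert n) this
      rwa [Finset.insert_erase hnS, Finset.insert_erase hnT] at this
    · exfalso
      have hTn : T ⊆ Finset.range n := by
        intro j hj
        have := hT hj
        simp only [Finset.mem_range] at *
        rcases Nat.lt_succ_iff_lt_or_eq.mp this with h | h
        · exact h
        · exact absurd (h ▸ hj) hnT
      have h1 : q ^ n ≤ ∑ j ∈ S, q ^ j := Finset.single_le_sum (f := (q ^ ·)) (by intros; positivity) hnS
      have h2 := sum_pow_lt hq hTn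
      omega
    · exfalso
      have hSn : S ⊆ Finset.range n := by
        intro j hj
        have := hS hj
        simp only [Finset.mem_range] at *
        rcases Nat.lt_succ_iff_lt_or_eq.mp this with h | h
        · exact h
        · exact absurd (h ▸ hj) hnS
      have h1 : q ^ n ≤ ∑ j ∈ T, q ^ j := Finset.single_le_sum (f := (q ^ ·)) (by intros; positivity) hnT
      have h2 := sum_pow_lt hq hSn
      omega
    · have hSn : S ⊆ Finset.range n := by
        intro j hj
        have := hS hj
        simp only [Finset.mem_range] at *
        rcases Nat.lt_succ_iff_lt_or_eq.mp this with h | h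
        · exact h
        · exact absurd (h ▸ hj) hnS
      have hTn : T ⊆ Finset.range n := by
        intro j hj
        have := hT hj
        simp only [Finset.mem_range] at *
        rcases Nat.lt_succ_iff_lt_or_eq.mp this with h | h
        · exact h
        · exact absurd (h ▸ hj) hnT
      exact ih _ _ hSn hTn hsum

end NatLemmas

section AddPoly

variable {F : Type*} [Field F] {G : Finset F}

lemma grp_zero_mem (hG : ∀ a ∈ G, ∀ b ∈ G, a - b ∈ G) (hne : G.Nonempty) : (0 : F) ∈ G := by
  obtain ⟨a, ha⟩ := hne
  simpa using hG a ha a ha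

lemma grp_neg_mem (hG : ∀ a ∈ G, ∀ b ∈ G, a - b ∈ G) (hne : G.Nonempty) {a : F} (ha : a ∈ G) :
    -a ∈ G := by
  simpa using hG 0 (grp_zero_mem hG hne) a ha

lemma grp_add_mem (hG : ∀ a ∈ G, ∀ b ∈ G, a - b ∈ G) (hne : G.Nonempty) {a b : F}
    (ha : a ∈ G) (hb : b ∈ G) : a + b ∈ G := by
  simpa [sub_neg_eq_add] using hG a ha (-b) (grp_neg_mem hG hne hb)

lemma grp_prod_reindex {M : Type*} [CommMonoid M] (hG : ∀ a ∈ G, ∀ b ∈ G, a - b ∈ G)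
    (hne : G.Nonempty) {a : F} (ha : a ∈ G) (f : F → M) :
    ∏ g ∈ G, f (g - a) = ∏ g ∈ G, f g := by
  refine Finset.prod_nbij' (fun g => g - a) (fun g => g + a) ?_ ?_ ?_ ?_ ?_
  · intro g hg; exact hG g hg a ha
  · intro g hg; exact grp_add_mem hG hne hg ha
  · intro g _; ring
  · intro g _; ring
  · intro g _; rfl

lemma addpoly_eval_mem (t : F) : (∏ g ∈ G, (X - C g)).eval t = 0 ↔ t ∈ G := by
  rw [eval_prod]
  rw [Finset.prod_eq_zero_iff]
  constructor
  · rintro ⟨g, hg, h⟩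
    simp only [eval_sub, eval_X, eval_C, sub_eq_zero] at h
    rwa [h]
  · intro ht; exact ⟨t, ht, by simp⟩

/-- Core identity: `P(x + y) = P(x) + P(y)` for `P = ∏_{g ∈ G} (X - g)`, `G` a finite
additive subgroup. -/
lemma addpoly_key (hG : ∀ a ∈ G, ∀ b ∈ G, a - b ∈ G) (hne : G.Nonempty) :
    (((∏ g ∈ G, (X - C g)).map (C : F →+* Polynomial F)).comp
        (Polynomial.C Polynomial.X + Polynomial.X) : Polynomial (Polynomial F)) =
      Polynomial.C (∏ g ∈ G, (X - C g)) + (∏ g ∈ G, (X - C g)).map C := by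
  classical
  set P : Polynomial F := ∏ g ∈ G, (X - C g) with hP
  have h0 : (0 : F) ∈ G := grp_zero_mem hG hne
  have hcard : 1 ≤ G.card := Finset.card_pos.mpr hne
  -- the LHS as a product
  have hL : ((P.map (C : F →+* Polynomial F)).comp (Polynomial.C Polynomial.X + Polynomial.X))
      = ∏ g ∈ G, (Polynomial.X + Polynomial.C (Polynomial.X - C g)) := by
    rw [hP, Polynomial.map_prod, Polynomial.prod_comp]
    refine Finset.prod_congr rfl fun g _ => ?_
    rw [Polynomial.map_sub, Polynomial.map_X, Polynomial.map_C, Polynomial.sub_comp,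
      Polynomial.X_comp, Polynomial.C_comp]
    rw [map_sub]
    ring
  set L : Polynomial (Polynomial F) := ∏ g ∈ G, (Polynomial.X + Polynomial.C (Polynomial.X - C g))
    with hLdef
  have hLmonic : L.Monic := monic_prod_of_monic _ _ fun g _ => monic_X_add_C _
  have hLdeg : L.natDegree = G.card := by
    rw [hLdef, natDegree_prod_of_monic _ _ fun g _ => monic_X_add_C _,
      Finset.sum_congr rfl (fun g _ => natDegree_X_add_C (Polynomial.X - C g))]
    simp
  have hPmonic : P.Monic := monic_prod_of_monic _ _ fun g _ => monic_X_sub_C _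
  have hPdeg : P.natDegree = G.card := by
    rw [hP, natDegree_prod_of_monic _ _ fun g _ => monic_X_sub_C _]
    simp
  have hPCmonic : (P.map (C : F →+* Polynomial F)).Monic := hPmonic.map _
  have hPCdeg : (P.map (C : F →+* Polynomial F)).natDegree = G.card := by
    rw [hPmonic.natDegree_map, hPdeg]
  rw [hL]
  rw [← sub_eq_zero]
  set D : Polynomial (Polynomial F) :=
    L - (Polynomial.C P + P.map (C : F →+* Polynomial F)) with hD
  show D = 0
  by_cases hD0 : D = 0
  · exact hD0
  exfalso
  apply hD0
  have hLdegree : L.degree = (G.card : WithBot ℕ) := by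
    rw [degree_eq_natDegree hLmonic.ne_zero, hLdeg]
  have hPCdegree : (P.map (C : F →+* Polynomial F)).degree = (G.card : WithBot ℕ) := by
    rw [degree_eq_natDegree hPCmonic.ne_zero, hPCdeg]
  have hdegD : D.natDegree < G.card := by
    have h1 : (L - P.map (C : F →+* Polynomial F)).degree < (G.card : WithBot ℕ) := by
      have := Polynomial.degree_sub_lt (hLdegree.trans hPCdegree.symm)
        hLmonic.ne_zero (by rw [hLmonic.leadingCoeff, hPCmonic.leadingCoeff])
      rwa [hLdegree] at this
    have h2 : (Polynomial.C P).degree < (G.card : WithBot ℕ) := by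
      refine lt_of_le_of_lt (degree_C_le) ?_
      exact_mod_cast WithBot.coe_lt_coe.mpr (by omega : 0 < G.card)
    have hDd : D.degree < (G.card : WithBot ℕ) := by
      have hDeq : D = (L - P.map (C : F →+* Polynomial F)) - Polynomial.C P := by rw [hD]; ring
      rw [hDeq]
      exact lt_of_le_of_lt (degree_sub_le _ _) (max_lt h1 h2)
    exact (natDegree_lt_iff_degree_lt hD0).mpr hDd
  -- D vanishes at C g₀ for every g₀ ∈ G
  refine Polynomial.eq_zero_of_natDegree_lt_card_of_eval_eq_zero' D (G.image (C : F → Polynomial F))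
    ?_ ?_
  · intro c hc
    obtain ⟨g₀, hg₀, rfl⟩ := Finset.mem_image.mp hc
    have e1 : L.eval (C g₀) = P := by
      rw [hLdef, eval_prod]
      have : ∀ g ∈ G, (Polynomial.X + Polynomial.C (Polynomial.X - C g)).eval (C g₀)
          = Polynomial.X - C (g - g₀) := by
        intro g _
        simp only [eval_add, eval_X, eval_C]
        rw [map_sub]
        ring
      rw [Finset.prod_congr rfl this]
      rw [hP]
      exact grp_prod_reindex hG hne hg₀ (fun t => Polynomial.X - C t)
    have e2 : (Polynomial.C P).eval (C g₀) = P := eval_C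
    have e3 : (P.map (C : F →+* Polynomial F)).eval (C g₀) = 0 := by
      rw [eval_map, Polynomial.eval₂_at_apply]
      rw [(addpoly_eval_mem g₀).mpr hg₀]
      exact map_zero _
    rw [hD]
    simp [e1, e2, e3]
  · rwa [Finset.card_image_of_injective _ (C_injective)]

/-- Additivity of evaluation of the subgroup polynomial under any ring hom. -/
lemma addpoly_eval_add (hG : ∀ a ∈ G, ∀ b ∈ G, a - b ∈ G) (hne : G.Nonempty)
    {S : Type*} [CommRing S] (ψ : F →+* S) (a b : S) :
    ((∏ g ∈ G, (X - C g)).map ψ).eval (a + b) =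
      ((∏ g ∈ G, (X - C g)).map ψ).eval a + ((∏ g ∈ G, (X - C g)).map ψ).eval b := by
  classical
  set P : Polynomial F := ∏ g ∈ G, (X - C g) with hP
  have key := addpoly_key hG hne
  rw [← hP] at key
  set Φ : Polynomial F →+* S := eval₂RingHom ψ a with hΦ
  have key2 := congrArg (fun r => (r.map Φ).eval b) key
  have hΦC : Φ.comp (C : F →+* Polynomial F) = ψ := by
    ext c
    simp [hΦ]
  have lhs : (((P.map (C : F →+* Polynomial F)).comp
      (Polynomial.C Polynomial.X + Polynomial.X)).map Φ).eval b = (P.map ψ).eval (a + b) := by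
    rw [Polynomial.map_comp, Polynomial.map_map, hΦC]
    rw [Polynomial.map_add, Polynomial.map_C, Polynomial.map_X]
    rw [Polynomial.eval_comp]
    have : Φ Polynomial.X = a := by simp [hΦ]
    rw [this]
    simp [add_comm]
  have rhs : ((Polynomial.C P + P.map (C : F →+* Polynomial F)).map Φ).eval b
      = (P.map ψ).eval a + (P.map ψ).eval b := by
    rw [Polynomial.map_add, Polynomial.map_C, Polynomial.map_map, hΦC]
    rw [eval_add, eval_C]
    congr 1
    simp [hΦ, eval₂_eq_eval_map]
  rw [lhs, rhs] at key2
  exact key2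

lemma addpoly_eval_zero {S : Type*} [CommRing S] (ψ : F →+* S) (h0 : (0 : F) ∈ G) :
    ((∏ g ∈ G, (X - C g)).map ψ).eval 0 = 0 := by
  have : ((0 : S)) = ψ 0 := by simp
  rw [this, eval_map, Polynomial.eval₂_at_apply, (addpoly_eval_mem (0 : F)).mpr h0, map_zero]

lemma addpoly_eval_sub (hG : ∀ a ∈ G, ∀ b ∈ G, a - b ∈ G) (hne : G.Nonempty)
    {S : Type*} [CommRing S] (ψ : F →+* S) (a b : S) :
    ((∏ g ∈ G, (X - C g)).map ψ).eval (a - b) =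
      ((∏ g ∈ G, (X - C g)).map ψ).eval a - ((∏ g ∈ G, (X - C g)).map ψ).eval b := by
  have := addpoly_eval_add hG hne ψ (a - b) b
  rw [sub_add_cancel] at this
  rw [eq_sub_iff_add_eq]
  exact this.symm

/-- Coefficients of the subgroup polynomial at indices `m ≥ 2` not divisible by the
characteristic vanish. -/
lemma addpoly_coeff_eq_zero (hG : ∀ a ∈ G, ∀ b ∈ G, a - b ∈ G) (hne : G.Nonempty)
    {m : ℕ} (hm : 2 ≤ m) (hmF : (m : F) ≠ 0) :
    (∏ g ∈ G, (X - C g)).coeff m = 0 := by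
  classical
  set P : Polynomial F := ∏ g ∈ G, (X - C g) with hP
  have key := addpoly_key hG hne
  rw [← hP] at key
  have key2 := congrArg Polynomial.derivative key
  rw [Polynomial.derivative_comp] at key2
  simp only [Polynomial.derivative_add, Polynomial.derivative_C, Polynomial.derivative_X,
    Polynomial.derivative_map, zero_add, one_mul] at key2
  -- evaluate at 0
  have key3 := congrArg (Polynomial.eval (0 : Polynomial F)) key2
  rw [Polynomial.eval_comp] at key3
  rw [Polynomial.eval_add, Polynomial.eval_C, Polynomial.eval_X, add_zero] at key3
  rw [Polynomial.eval_map, Polynomial.eval₂_C_X] at key3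
  rw [Polynomial.eval_map, Polynomial.eval₂_at_zero] at key3
  -- key3 : derivative P = C ((derivative P).coeff 0)
  have hc := congrArg (fun r => Polynomial.coeff r (m - 1)) key3
  simp only [Polynomial.coeff_derivative, Polynomial.coeff_C] at hc
  rw [if_neg (by omega)] at hc
  have hsub : m - 1 + 1 = m := by omega
  rw [hsub] at hc
  have : (P.coeff m) * ((m : F)) = 0 := by
    have : ((m - 1 : ℕ) : F) + 1 = (m : F) := by
      push_cast [Nat.cast_sub (by omega : 1 ≤ m)]
      ring
    rwa [this] at hc
  rcases mul_eq_zero.mp this with h | h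
  · exact h
  · exact absurd h hmF

end AddPoly

section Fpoly

variable {R : Type*} [CommRing R]

lemma fpoly_map {S : Type*} [CommRing S] (ψ : R →+* S) (q n : ℕ) :
    (∑ j ∈ Finset.range n, (X : R[X]) ^ q ^ j).map ψ
      = ∑ j ∈ Finset.range n, (X : S[X]) ^ q ^ j := by
  have := map_sum (Polynomial.mapRingHom ψ) (fun j => (X : R[X]) ^ q ^ j) (Finset.range n)
  simp only [coe_mapRingHom] at this
  rw [this]
  refine Finset.sum_congr rfl fun j _ => ?_
  rw [Polynomial.map_pow, Polynomial.map_X]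

lemma fpoly_eval_add (p e q n : ℕ) (hq : q = p ^ e) [Fact p.Prime] [CharP R p] (a b : R) :
    Polynomial.eval (a + b) (∑ j ∈ Finset.range n, (X : R[X]) ^ q ^ j) =
      Polynomial.eval a (∑ j ∈ Finset.range n, (X : R[X]) ^ q ^ j) +
      Polynomial.eval b (∑ j ∈ Finset.range n, (X : R[X]) ^ q ^ j) := by
  subst hq
  simp only [eval_finset_sum, eval_pow, eval_X]
  rw [← Finset.sum_add_distrib]
  refine Finset.sum_congr rfl fun j _ => ?_
  rw [← pow_mul, add_pow_char_pow]

lemma fpoly_eval_sub (p e q n : ℕ) (hq : q = p ^ e) [Fact p.Prime] [CharP R p] (a b : R) :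
    Polynomial.eval (a - b) (∑ j ∈ Finset.range n, (X : R[X]) ^ q ^ j) =
      Polynomial.eval a (∑ j ∈ Finset.range n, (X : R[X]) ^ q ^ j) -
      Polynomial.eval b (∑ j ∈ Finset.range n, (X : R[X]) ^ q ^ j) := by
  have := fpoly_eval_add p e q n hq (a - b) b
  rw [sub_add_cancel] at this
  rw [eq_sub_iff_add_eq]
  exact this.symm

lemma fpoly_tail_degree_lt [Nontrivial R] {q n : ℕ} (hq : 2 ≤ q) (hn : 1 ≤ n) :
    (∑ j ∈ Finset.range (n - 1), (X : R[X]) ^ q ^ j).degree < ((q ^ (n - 1) : ℕ) : WithBot ℕ) := by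
  refine lt_of_le_of_lt (degree_sum_le _ _) ?_
  rw [Finset.sup_lt_iff (by exact_mod_cast WithBot.bot_lt_coe _)]
  intro j hj
  rw [degree_X_pow]
  exact_mod_cast Nat.pow_lt_pow_right (by omega) (Finset.mem_range.mp hj)

lemma fpoly_eq [Nontrivial R] {q n : ℕ} (hn : 1 ≤ n) :
    (∑ j ∈ Finset.range n, (X : R[X]) ^ q ^ j) =
      X ^ q ^ (n - 1) + ∑ j ∈ Finset.range (n - 1), (X : R[X]) ^ q ^ j := by
  have : n = (n - 1) + 1 := by omega
  rw [this, Finset.sum_range_succ]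
  simp only [Nat.add_sub_cancel]
  ring

lemma fpoly_monic [Nontrivial R] {q n : ℕ} (hq : 2 ≤ q) (hn : 1 ≤ n) :
    (∑ j ∈ Finset.range n, (X : R[X]) ^ q ^ j).Monic := by
  rw [fpoly_eq hn]
  exact monic_X_pow_add (fpoly_tail_degree_lt hq hn)

lemma fpoly_natDegree [Nontrivial R] {q n : ℕ} (hq : 2 ≤ q) (hn : 1 ≤ n) :
    (∑ j ∈ Finset.range n, (X : R[X]) ^ q ^ j).natDegree = q ^ (n - 1) := by
  rw [fpoly_eq hn]
  have h1 : ((X : R[X]) ^ q ^ (n - 1)).degree = ((q ^ (n - 1) : ℕ) : WithBot ℕ) := by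
    rw [degree_X_pow]
  have := degree_add_eq_left_of_degree_lt (p := (X : R[X]) ^ q ^ (n - 1))
    (q := ∑ j ∈ Finset.range (n - 1), (X : R[X]) ^ q ^ j)
    (by rw [h1]; exact fpoly_tail_degree_lt hq hn)
  rw [h1] at this
  exact natDegree_eq_of_degree_eq_some this

lemma fpoly_derivative (p e q n : ℕ) (hq : q = p ^ e) [Fact p.Prime] [CharP R p] (he : 0 < e)
    (hn : 0 < n) :
    Polynomial.derivative (∑ j ∈ Finset.range n, (X : R[X]) ^ q ^ j) = 1 := by
  subst hq
  rw [map_sum]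
  have : ∀ j ∈ Finset.range n, Polynomial.derivative ((X : R[X]) ^ (p ^ e) ^ j) =
      if j = 0 then 1 else 0 := by
    intro j _
    rw [Polynomial.derivative_X_pow]
    by_cases hj : j = 0
    · simp [hj]
    · rw [if_neg hj]
      have hp : p ∣ (p ^ e) ^ j :=
        dvd_pow (dvd_pow_self p (Nat.pos_iff_ne_zero.mp he)) hj
      have h0 : (((p ^ e) ^ j : ℕ) : R) = 0 := (CharP.cast_eq_zero_iff R p _).mpr hp
      rw [h0]
      simp
  rw [Finset.sum_congr rfl this]
  rw [Finset.sum_ite_eq' (Finset.range n) (0 : ℕ) (fun _ => (1 : R[X])),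
    if_pos (Finset.mem_range.mpr hn)]

lemma fpoly_eval_zero {q n : ℕ} (hq : 1 ≤ q) :
    Polynomial.eval (0 : R) (∑ j ∈ Finset.range n, (X : R[X]) ^ q ^ j) = 0 := by
  simp only [eval_finset_sum, eval_pow, eval_X]
  rw [Finset.sum_congr rfl (fun j _ => zero_pow (n := q ^ j) (by positivity))]
  simp

end Fpoly
section SnqLemmas

variable {R : Type*} [CommRing R] [Nontrivial R]

lemma snq_coeff {q n i : ℕ} (hq : 2 ≤ q) {S₀ : Finset ℕ}
    (hS₀ : S₀ ∈ Finset.powersetCard i (Finset.range n)) :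
    (snq q n i R).coeff (∑ j ∈ S₀, q ^ j) = 1 := by
  classical
  rw [snq, finset_sum_coeff]
  rw [Finset.sum_eq_single S₀]
  · rw [coeff_X_pow, if_pos rfl]
  · intro T hT hTne
    rw [coeff_X_pow, if_neg]
    intro h
    exact hTne (sum_pow_inj hq n T S₀ (Finset.mem_powersetCard.mp hT).1
      (Finset.mem_powersetCard.mp hS₀).1 h.symm)
  · intro h
    exact absurd hS₀ h

lemma snq_natDegree_le {q n i : ℕ} :
    (snq q n i R).natDegree ≤ ∑ j ∈ Finset.range n, q ^ j := by
  rw [snq]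
  refine natDegree_sum_le_of_forall_le _ _ fun S hS => ?_
  rw [natDegree_X_pow]
  exact Finset.sum_le_sum_of_subset (Finset.mem_powersetCard.mp hS).1

end SnqLemmas
theorem main_irred {k : Type*} [Field k] [IsAlgClosed k] (p e n i q : ℕ) [Fact p.Prime]
    [CharP k p] (he : 0 < e) (hn : 2 ≤ n) (hi2 : 2 ≤ i) (hin : i ≤ n) (hq : q = p ^ e) :
    Irreducible
      ((∑ j ∈ Finset.range n, (X : Polynomial (Polynomial k)) ^ q ^ j)
        - C (snq q n i k)) := by
  classical
  have hp2 : 2 ≤ p := (Fact.out : p.Prime).two_le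
  have hq2 : 2 ≤ q := by
    subst hq
    calc 2 ≤ p := hp2
    _ = p ^ 1 := (pow_one p).symm
    _ ≤ p ^ e := Nat.pow_le_pow_right (by omega) he
  set g : Polynomial k := snq q n i k with hg
  set fR : Polynomial (Polynomial k) :=
    ∑ j ∈ Finset.range n, (X : Polynomial (Polynomial k)) ^ q ^ j with hfR
  set hT : Polynomial (Polynomial k) := fR - C g with hhT
  have hfR_monic : fR.Monic := fpoly_monic hq2 (by omega)
  have hfR_deg : fR.natDegree = q ^ (n - 1) := fpoly_natDegree hq2 (by omega)
  have hqn1 : 2 ≤ q ^ (n - 1) := by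
    calc 2 ≤ q := hq2
    _ = q ^ 1 := (pow_one q).symm
    _ ≤ q ^ (n - 1) := Nat.pow_le_pow_right (by omega) (by omega)
  have hT_monic : hT.Monic := by
    have h1 : hT = fR + (-C g) := by rw [hhT]; ring
    rw [h1]
    refine hfR_monic.add_of_left ?_
    refine lt_of_le_of_lt (degree_neg (C g) ▸ degree_C_le) ?_
    rw [degree_eq_natDegree hfR_monic.ne_zero, hfR_deg]
    exact_mod_cast (by omega : 0 < q ^ (n - 1))
  have hT_deg : hT.natDegree = q ^ (n - 1) := by
    rw [hhT, natDegree_sub_C, hfR_deg]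
  -- pass to the fraction field
  letI K := FractionRing (Polynomial k)
  rw [hT_monic.irreducible_iff_irreducible_map_fraction_map (K := K)]
  set hK : Polynomial K := hT.map (algebraMap (Polynomial k) K) with hhK
  have hK_monic : hK.Monic := hT_monic.map _
  have hK_deg : hK.natDegree = q ^ (n - 1) := by
    rw [hhK, hT_monic.natDegree_map, hT_deg]
  haveI : CharP (Polynomial k) p := inferInstance
  haveI : CharP K p := charP_of_injective_ringHom (IsFractionRing.injective (Polynomial k) K) p
  have hderT : Polynomial.derivative hT = 1 := by
    rw [hhT, map_sub, derivative_C, sub_zero, hfR]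
    exact fpoly_derivative p e q n hq he (by omega)
  have hK_sep : hK.Separable := by
    rw [Polynomial.Separable, hhK, derivative_map, hderT, Polynomial.map_one]
    exact isCoprime_one_right
  letI L := hK.SplittingField
  haveI : IsGalois K L := IsGalois.of_separable_splitting_field hK_sep
  haveI : CharP L p := charP_of_injective_ringHom (algebraMap K L).injective p
  obtain ⟨θ, hθ'⟩ := (SplittingField.splits hK).exists_eval_eq_zero
    (by rw [degree_map, degree_eq_natDegree hK_monic.ne_zero, hK_deg]
        exact_mod_cast (by omega : q ^ (n - 1) ≠ 0))
  have hθ : eval₂ (algebraMap K L) θ hK = 0 := by rw [eval₂_eq_eval_map]; exact hθ'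
  set jR : Polynomial k →+* L := (algebraMap K L).comp (algebraMap (Polynomial k) K) with hjR
  set ι : k →+* L := jR.comp (C : k →+* Polynomial k) with hι
  have hjinj : Function.Injective jR :=
    (algebraMap K L).injective.comp (IsFractionRing.injective (Polynomial k) K)
  have hιinj : Function.Injective ι := hjinj.comp (C_injective)
  set fL : Polynomial L := ∑ j ∈ Finset.range n, (X : Polynomial L) ^ q ^ j with hfL
  set fk : Polynomial k := ∑ j ∈ Finset.range n, (X : Polynomial k) ^ q ^ j with hfk
  have hmapT : hK.map (algebraMap K L) = hT.map jR :=
    Polynomial.map_map (algebraMap (Polynomial k) K) (algebraMap K L) hT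
  have hθaeval : Polynomial.aeval θ hK = 0 := by rw [aeval_def]; exact hθ
  have hθint : IsIntegral K θ := ⟨hK, hK_monic, hθ⟩
  have hevalT : ∀ t : L, Polynomial.aeval t hK = 0 → fL.eval t = jR g := by
    intro t ht
    have h1 : Polynomial.eval t (hT.map jR) = 0 := by
      rw [← hmapT, ← eval₂_eq_eval_map, ← aeval_def]
      exact ht
    rw [hhT, Polynomial.map_sub, Polynomial.map_C, eval_sub, eval_C, sub_eq_zero] at h1
    rw [hfR, fpoly_map jR q n, ← hfL] at h1
    exact h1
  have hθfL : fL.eval θ = jR g := hevalT θ hθaeval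
  -- the kernel V over k
  have hfk_monic : fk.Monic := fpoly_monic hq2 (by omega)
  have hfk_deg : fk.natDegree = q ^ (n - 1) := fpoly_natDegree hq2 (by omega)
  have hfk_sep : fk.Separable := by
    rw [Polynomial.Separable, hfk, fpoly_derivative p e q n hq he (by omega)]
    exact isCoprime_one_right
  have hnodup : fk.roots.Nodup := nodup_roots hfk_sep
  have hsplits : fk.Splits := IsAlgClosed.splits fk
  set Vk : Finset k := fk.roots.toFinset with hVk
  have hVcard : Vk.card = q ^ (n - 1) := by
    rw [hVk, Multiset.toFinset_card_of_nodup hnodup, splits_iff_card_roots.mp hsplits, hfk_deg]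
  have hVmem : ∀ t : k, t ∈ Vk ↔ fk.eval t = 0 := by
    intro t
    rw [hVk, Multiset.mem_toFinset, mem_roots hfk_monic.ne_zero]
    rfl
  have hVsub : ∀ a ∈ Vk, ∀ b ∈ Vk, a - b ∈ Vk := by
    intro a ha b hb
    rw [hVmem] at *
    rw [hfk, fpoly_eval_sub p e q n hq, ← hfk, ha, hb, sub_zero]
  have hV0 : (0 : k) ∈ Vk := by
    rw [hVmem, hfk]
    exact fpoly_eval_zero (by omega)
  have hVne : Vk.Nonempty := ⟨0, hV0⟩
  set VL : Finset L := Vk.image ι with hVL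
  have hVLcard : VL.card = q ^ (n - 1) := by
    rw [hVL, Finset.card_image_of_injective _ hιinj, hVcard]
  have hfL_eq_map : fk.map ι = fL := by rw [hfk, fpoly_map ι q n, hfL]
  have hfL_monic : fL.Monic := fpoly_monic hq2 (by omega)
  have hfL_deg : fL.natDegree = q ^ (n - 1) := fpoly_natDegree hq2 (by omega)
  have hVLroots : VL ⊆ fL.roots.toFinset := by
    intro t ht
    obtain ⟨v, hv, rfl⟩ := Finset.mem_image.mp ht
    refine Multiset.mem_toFinset.mpr (mem_roots'.mpr ⟨hfL_monic.ne_zero, ?_⟩)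
    show fL.eval (ι v) = 0
    rw [← hfL_eq_map, eval_map, Polynomial.eval₂_at_apply, (hVmem v).mp hv, map_zero]
  have hrootsVL : ∀ t : L, fL.eval t = 0 → t ∈ VL := by
    intro t ht
    have hcards : fL.roots.toFinset.card ≤ q ^ (n - 1) :=
      le_trans (Multiset.toFinset_card_le _) (le_trans (card_roots' fL) (le_of_eq hfL_deg))
    have heq : VL = fL.roots.toFinset :=
      Finset.eq_of_subset_of_card_le hVLroots (by rw [hVLcard]; exact hcards)
    rw [heq]
    exact Multiset.mem_toFinset.mpr (mem_roots'.mpr ⟨hfL_monic.ne_zero, ht⟩)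
  -- Galois orbit differences
  set φ : (L ≃ₐ[K] L) → L := fun σ => σ θ - θ with hφ
  have hfixι : ∀ (σ : L ≃ₐ[K] L) (w : k), σ (ι w) = ι w := by
    intro σ w
    rw [hι, hjR]
    simp only [RingHom.coe_comp, Function.comp_apply]
    exact σ.commutes _
  have hφroot : ∀ σ : L ≃ₐ[K] L, φ σ ∈ VL := by
    intro σ
    have h1 : Polynomial.aeval (σ θ) hK = 0 := by
      rw [aeval_algHom_apply σ θ hK, hθaeval, map_zero]
    have h2 : fL.eval (σ θ) = jR g := hevalT _ h1
    apply hrootsVL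
    rw [hφ]
    rw [hfL, fpoly_eval_sub p e q n hq, ← hfL, h2, hθfL, sub_self]
  have hfixVL : ∀ (σ : L ≃ₐ[K] L) (t : L), t ∈ VL → σ t = t := by
    intro σ t ht
    obtain ⟨v, _, rfl⟩ := Finset.mem_image.mp ht
    exact hfixι σ v
  have hφadd : ∀ σ τ : L ≃ₐ[K] L, φ (σ * τ) = φ σ + φ τ := by
    intro σ τ
    show (σ * τ) θ - θ = (σ θ - θ) + (τ θ - θ)
    rw [AlgEquiv.mul_apply]
    have h1 : τ θ = θ + (τ θ - θ) := by ring
    rw [h1, map_add, hfixVL σ _ (hφroot τ)]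
    ring
  set G : Finset L := Finset.image φ Finset.univ with hG
  have hG0 : (0 : L) ∈ G := by
    refine Finset.mem_image.mpr ⟨1, Finset.mem_univ _, ?_⟩
    rw [hφ]
    simp
  have hGsub : ∀ a ∈ G, ∀ b ∈ G, a - b ∈ G := by
    intro a ha b hb
    obtain ⟨σ, _, rfl⟩ := Finset.mem_image.mp ha
    obtain ⟨τ, _, rfl⟩ := Finset.mem_image.mp hb
    refine Finset.mem_image.mpr ⟨σ * τ⁻¹, Finset.mem_univ _, ?_⟩
    have h1 : φ (σ * τ⁻¹ * τ) = φ (σ * τ⁻¹) + φ τ := hφadd _ _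
    rw [inv_mul_cancel_right] at h1
    rw [eq_sub_iff_add_eq, ← h1]
  have hGVL : G ⊆ VL := by
    intro x hx
    obtain ⟨σ, _, rfl⟩ := Finset.mem_image.mp hx
    exact hφroot σ
  by_cases hcase : G = VL
  · -- every translate θ + v is a conjugate: hK is the minimal polynomial
    have horb : ∀ t ∈ VL, ∃ σ : L ≃ₐ[K] L, σ θ = θ + t := by
      intro t ht
      rw [← hcase] at ht
      obtain ⟨σ, _, hσ⟩ := Finset.mem_image.mp ht
      exact ⟨σ, by rw [← hσ, hφ]; ring⟩
    set m : Polynomial K := minpoly K θ with hm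
    have hmdvd : m ∣ hK := minpoly.dvd K θ hθaeval
    have hm0 : m ≠ 0 := minpoly.ne_zero hθint
    have hroots_sub : VL.image (fun t => θ + t) ⊆ (m.map (algebraMap K L)).roots.toFinset := by
      intro x hx
      obtain ⟨t, ht, rfl⟩ := Finset.mem_image.mp hx
      obtain ⟨σ, hσ⟩ := horb t ht
      rw [← hσ]
      refine Multiset.mem_toFinset.mpr (mem_roots'.mpr ⟨map_ne_zero hm0, ?_⟩)
      show Polynomial.eval (σ θ) (m.map (algebraMap K L)) = 0
      rw [← eval₂_eq_eval_map, ← aeval_def, aeval_algHom_apply σ θ m, minpoly.aeval, map_zero]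
    have hcard : q ^ (n - 1) ≤ m.natDegree := by
      calc q ^ (n - 1) = (VL.image (fun t => θ + t)).card := by
            rw [Finset.card_image_of_injective _ (add_right_injective θ), hVLcard]
      _ ≤ (m.map (algebraMap K L)).roots.toFinset.card := Finset.card_le_card hroots_sub
      _ ≤ Multiset.card (m.map (algebraMap K L)).roots := Multiset.toFinset_card_le _
      _ ≤ (m.map (algebraMap K L)).natDegree := card_roots' _
      _ = m.natDegree := natDegree_map _
    obtain ⟨c, hc⟩ := hmdvd
    have hc0 : c ≠ 0 := by
      rintro rfl
      rw [mul_zero] at hc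
      exact hK_monic.ne_zero hc
    have hdegs := natDegree_mul hm0 hc0
    rw [← hc, hK_deg] at hdegs
    have hcdeg : c.natDegree = 0 := by omega
    have hc1 : c = C (c.coeff 0) := eq_C_of_natDegree_eq_zero hcdeg
    have hcoe : c.coeff 0 = 1 := by
      have hlc := congrArg leadingCoeff hc
      rw [hK_monic.leadingCoeff, leadingCoeff_mul, (minpoly.monic hθint).leadingCoeff,
        one_mul, hc1, leadingCoeff_C] at hlc
      exact hlc.symm
    have : hK = m := by rw [hc, hc1, hcoe, map_one, mul_one]
    rw [this]
    exact minpoly.irreducible hθint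
  · exfalso
    have hGne : G.Nonempty := ⟨0, hG0⟩
    set Gk : Finset k := Vk.filter (fun a => ι a ∈ G) with hGk
    have hGkim : Gk.image ι = G := by
      ext x
      constructor
      · intro hx
        obtain ⟨a, ha, rfl⟩ := Finset.mem_image.mp hx
        exact (Finset.mem_filter.mp ha).2
      · intro hx
        obtain ⟨v, hv, rfl⟩ := Finset.mem_image.mp (hGVL hx)
        exact Finset.mem_image.mpr ⟨v, Finset.mem_filter.mpr ⟨hv, hx⟩, rfl⟩
    have hGkVk : Gk ⊆ Vk := Finset.filter_subset _ _
    have hGksub : ∀ a ∈ Gk, ∀ b ∈ Gk, a - b ∈ Gk := by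
      intro a ha b hb
      have h1 := Finset.mem_filter.mp ha
      have h2 := Finset.mem_filter.mp hb
      refine Finset.mem_filter.mpr ⟨hVsub a h1.1 b h2.1, ?_⟩
      rw [map_sub]
      exact hGsub _ h1.2 _ h2.2
    have hGk0 : (0 : k) ∈ Gk := Finset.mem_filter.mpr ⟨hV0, by rw [map_zero]; exact hG0⟩
    have hGkne : Gk.Nonempty := ⟨0, hGk0⟩
    have hGkcard_lt : Gk.card < q ^ (n - 1) := by
      have h1 : Gk.card = G.card := by
        rw [← hGkim, Finset.card_image_of_injective _ hιinj]
      have h2 := Finset.card_lt_card (ssubset_of_subset_of_ne hGVL hcase)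
      omega
    set PG : Polynomial k := ∏ a ∈ Gk, (X - C a) with hPG
    set u : L := (PG.map ι).eval θ with hu
    have hprodPG : ∀ t : L, (PG.map ι).eval t = ∏ a ∈ Gk, (t - ι a) := by
      intro t
      rw [hPG, Polynomial.map_prod, eval_prod]
      exact Finset.prod_congr rfl fun a _ => by simp
    have hufix : ∀ σ : L ≃ₐ[K] L, σ u = u := by
      intro σ
      have hφG : φ σ ∈ G := Finset.mem_image.mpr ⟨σ, Finset.mem_univ _, rfl⟩
      rw [← hGkim] at hφG
      obtain ⟨a, haGk, ha⟩ := Finset.mem_image.mp hφG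
      have hσθ : σ θ = θ + ι a := by rw [ha, hφ]; ring
      have hstep : σ u = ∏ a' ∈ Gk, σ (θ - ι a') := by
        rw [hu, hprodPG, map_prod]
      rw [hstep, hu, hprodPG θ]
      calc ∏ a' ∈ Gk, σ (θ - ι a') = ∏ a' ∈ Gk, (θ - ι (a' - a)) := by
            refine Finset.prod_congr rfl fun a' _ => ?_
            rw [map_sub, hfixι, hσθ, map_sub]
            ring
      _ = ∏ a' ∈ Gk, (θ - ι a') := grp_prod_reindex hGksub hGkne haGk (fun t => θ - ι t)
    have humem : ∃ y : K, algebraMap K L y = u := by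
      have h1 : IntermediateField.fixedField (⊤ : Subgroup (L ≃ₐ[K] L)) = ⊥ :=
        OrderIso.map_bot (IsGalois.intermediateFieldEquivSubgroup (F := K) (E := L)).symm
      have h2 : u ∈ IntermediateField.fixedField (⊤ : Subgroup (L ≃ₐ[K] L)) := by
        intro σ
        exact hufix σ.1
      rw [h1] at h2
      exact IntermediateField.mem_bot.mp h2
    obtain ⟨uK, huK⟩ := humem
    -- the image subgroup W
    set W : Finset k := Vk.image (fun v => PG.eval v) with hW
    have hPGeval_mem : ∀ t : k, PG.eval t = 0 ↔ t ∈ Gk := fun t => addpoly_eval_mem t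
    have hPGid : PG.map (RingHom.id k) = PG := Polynomial.map_id
    have hPGsub : ∀ a b : k, PG.eval (a - b) = PG.eval a - PG.eval b := by
      intro a b
      have := addpoly_eval_sub hGksub hGkne (RingHom.id k) a b
      rwa [← hPG, hPGid] at this
    have hPGadd : ∀ a b : k, PG.eval (a + b) = PG.eval a + PG.eval b := by
      intro a b
      have := addpoly_eval_add hGksub hGkne (RingHom.id k) a b
      rwa [← hPG, hPGid] at this
    have hWsub : ∀ a ∈ W, ∀ b ∈ W, a - b ∈ W := by
      intro a ha b hb
      obtain ⟨v1, hv1, rfl⟩ := Finset.mem_image.mp ha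
      obtain ⟨v2, hv2, rfl⟩ := Finset.mem_image.mp hb
      exact Finset.mem_image.mpr ⟨v1 - v2, hVsub _ hv1 _ hv2, hPGsub v1 v2⟩
    have hW0 : (0 : k) ∈ W :=
      Finset.mem_image.mpr ⟨0, hV0, (hPGeval_mem 0).mpr hGk0⟩
    -- fibers of PG.eval on Vk
    have hfib : ∀ w ∈ W, ∃ vw, vw ∈ Vk ∧ PG.eval vw = w ∧
        Vk.filter (fun v => PG.eval v = w) = Gk.image (fun a => vw + a) := by
      intro w hw
      obtain ⟨vw, hvw, hvweq⟩ := Finset.mem_image.mp hw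
      refine ⟨vw, hvw, hvweq, ?_⟩
      ext a
      simp only [Finset.mem_filter, Finset.mem_image]
      constructor
      · rintro ⟨haV, hae⟩
        refine ⟨a - vw, ?_, by ring⟩
        have h1 : PG.eval (a - vw) = 0 := by rw [hPGsub, hae, hvweq, sub_self]
        exact (hPGeval_mem _).mp h1
      · rintro ⟨a', ha', rfl⟩
        refine ⟨grp_add_mem hVsub hVne hvw (hGkVk ha'), ?_⟩
        rw [hPGadd, hvweq, (hPGeval_mem a').mpr ha', add_zero]
    have hVWcard : Vk.card = W.card * Gk.card := by
      rw [Finset.card_eq_sum_card_fiberwise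
        (fun v hv => Finset.mem_image.mpr ⟨v, hv, rfl⟩ : ∀ v ∈ Vk, PG.eval v ∈ W)]
      have h1 : ∀ w ∈ W, (Vk.filter (fun v => PG.eval v = w)).card = Gk.card := by
        intro w hw
        obtain ⟨vw, _, _, heq⟩ := hfib w hw
        rw [heq, Finset.card_image_of_injective _ (add_right_injective vw)]
      rw [Finset.sum_congr rfl h1, Finset.sum_const, smul_eq_mul]
    have hWne : W.card ≠ 0 := by
      intro h
      rw [Finset.card_eq_zero] at h
      rw [h] at hW0
      exact absurd hW0 (Finset.notMem_empty 0)
    have hWcard2 : 2 ≤ W.card := by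
      rcases Nat.lt_or_ge W.card 2 with h | h
      · exfalso
        have hW1 : W.card = 1 := by omega
        rw [hVcard, hW1, one_mul] at hVWcard
        omega
      · exact h
    have hpW : p ∣ W.card := by
      have hdvd : W.card ∣ p ^ (e * (n - 1)) := by
        refine Dvd.intro Gk.card ?_
        rw [pow_mul, ← hq, ← hVcard, hVWcard]
      obtain ⟨t, _, hWt⟩ := (Nat.dvd_prime_pow Fact.out).mp hdvd
      have ht0 : t ≠ 0 := by
        rintro rfl
        rw [pow_zero] at hWt
        omega
      rw [hWt]
      exact dvd_pow_self p ht0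
    -- the key equation in L
    have hfkprod : fk = ∏ v ∈ Vk, (X - C v) := by
      have h1 := hsplits.eq_prod_roots_of_monic hfk_monic
      rw [Finset.prod_eq_multiset_prod]
      have h2 : Vk.val = fk.roots := by
        rw [hVk, Multiset.toFinset_val, Multiset.dedup_eq_self.mpr hnodup]
      rw [h2, ← h1]
    have hkeyL : ∏ w ∈ W, (u - ι w) = jR g := by
      have h2 : fL = ∏ v ∈ Vk, (X - C (ι v)) := by
        rw [← hfL_eq_map, hfkprod, Polynomial.map_prod]
        exact Finset.prod_congr rfl fun v _ => by simp
      have h3 : fL.eval θ = ∏ v ∈ Vk, (θ - ι v) := by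
        rw [h2, eval_prod]
        exact Finset.prod_congr rfl fun v _ => by simp
      rw [← hθfL, h3]
      rw [← Finset.prod_fiberwise_of_maps_to
        (fun v hv => Finset.mem_image.mpr ⟨v, hv, rfl⟩ : ∀ v ∈ Vk, PG.eval v ∈ W)
        (fun v => θ - ι v)]
      refine Finset.prod_congr rfl fun w hw => ?_
      obtain ⟨vw, hvwV, hvweq, heq⟩ := hfib w hw
      rw [heq, Finset.prod_image (fun a _ b _ h => by
        have := add_right_injective vw h; exact this)]
      have h4 : ∀ a ∈ Gk, θ - ι (vw + a) = (θ - ι vw) - ι a := by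
        intro a _
        rw [map_add]
        ring
      rw [Finset.prod_congr rfl h4]
      have h5 : ∏ a ∈ Gk, ((θ - ι vw) - ι a) = (PG.map ι).eval (θ - ι vw) :=
        (hprodPG _).symm
      rw [h5]
      have h6 := addpoly_eval_sub hGksub hGkne ι θ (ι vw)
      rw [← hPG] at h6
      rw [h6, ← hu]
      have h7 : (PG.map ι).eval (ι vw) = ι (PG.eval vw) := by
        rw [eval_map, Polynomial.eval₂_at_apply]
      rw [h7, hvweq]
    -- descend to K
    have hιw : ∀ w : k, ι w = algebraMap K L (algebraMap (Polynomial k) K (C w)) := by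
      intro w
      rw [hι, hjR]
      rfl
    have hkeyK : ∏ w ∈ W, (uK - algebraMap (Polynomial k) K (C w))
        = algebraMap (Polynomial k) K g := by
      apply (algebraMap K L).injective
      rw [map_prod]
      have h1 : ∀ w ∈ W, algebraMap K L (uK - algebraMap (Polynomial k) K (C w)) = u - ι w := by
        intro w _
        rw [map_sub, huK, hιw]
      rw [Finset.prod_congr rfl h1, hkeyL, hjR]
      rfl
    have hintuK : IsIntegral (Polynomial k) uK := by
      refine ⟨(∏ w ∈ W, (X - C (C w))) - C g, ?_, ?_⟩
      · have hm1 : (∏ w ∈ W, ((X : Polynomial (Polynomial k)) - C (C w))).Monic :=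
          monic_prod_of_monic _ _ fun _ _ => monic_X_sub_C _
        have hm1deg : (∏ w ∈ W, ((X : Polynomial (Polynomial k)) - C (C w))).natDegree
            = W.card := by
          rw [natDegree_prod_of_monic _ _ fun _ _ => monic_X_sub_C _]
          simp [natDegree_X_sub_C]
        rw [sub_eq_add_neg]
        refine hm1.add_of_left ?_
        refine lt_of_le_of_lt (degree_neg (C g) ▸ degree_C_le) ?_
        rw [degree_eq_natDegree hm1.ne_zero, hm1deg]
        exact_mod_cast (by omega : 0 < W.card)
      · rw [eval₂_sub, eval₂_C, sub_eq_zero]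
        have h1 : Polynomial.eval₂ (algebraMap (Polynomial k) K) uK
            (∏ w ∈ W, ((X : Polynomial (Polynomial k)) - C (C w)))
            = ∏ w ∈ W, (uK - algebraMap (Polynomial k) K (C w)) := by
          rw [eval₂_eq_eval_map, Polynomial.map_prod, eval_prod]
          exact Finset.prod_congr rfl fun w _ => by simp
        rw [h1, hkeyK]
    obtain ⟨ut, hut⟩ := IsIntegrallyClosed.isIntegral_iff.mp hintuK
    have hkeyR : ∏ w ∈ W, (ut - C w) = g := by
      apply IsFractionRing.injective (Polynomial k) K
      rw [map_prod]
      have h1 : ∀ w ∈ W, algebraMap (Polynomial k) K (ut - C w)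
          = uK - algebraMap (Polynomial k) K (C w) := by
        intro w _
        rw [map_sub, hut]
      rw [Finset.prod_congr rfl h1, hkeyK]
    -- the special exponent r
    set A : ℕ := ∑ j ∈ Finset.Ico (n - i + 1) n, q ^ j with hA
    set r : ℕ := 1 + A with hr
    have h0notIco : (0 : ℕ) ∉ Finset.Ico (n - i + 1) n := by
      rw [Finset.mem_Ico]
      omega
    have hSstar : insert 0 (Finset.Ico (n - i + 1) n) ∈
        Finset.powersetCard i (Finset.range n) := by
      rw [Finset.mem_powersetCard]
      constructor
      · intro x hx
        rcases Finset.mem_insert.mp hx with rfl | hx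
        · exact Finset.mem_range.mpr (by omega)
        · rw [Finset.mem_Ico] at hx
          exact Finset.mem_range.mpr (by omega)
      · rw [Finset.card_insert_of_notMem h0notIco, Nat.card_Ico]
        omega
    have hrsum : ∑ j ∈ insert 0 (Finset.Ico (n - i + 1) n), q ^ j = r := by
      rw [Finset.sum_insert h0notIco, pow_zero, hr, hA]
    have hcoeffg : g.coeff r = 1 := by
      rw [hg, ← hrsum]
      exact snq_coeff hq2 hSstar
    have hgne : g ≠ 0 := by
      intro h
      rw [h, coeff_zero] at hcoeffg
      exact zero_ne_one hcoeffg
    have hgdeg_le : g.natDegree ≤ ∑ j ∈ Finset.range n, q ^ j := hg ▸ snq_natDegree_le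
    have hfacne : ∀ w ∈ W, ut - C w ≠ 0 := by
      intro w hw h0
      exact hgne (by rw [← hkeyR]; exact Finset.prod_eq_zero hw h0)
    have hgdeg_eq : g.natDegree = W.card * ut.natDegree := by
      rw [← hkeyR, natDegree_prod _ _ hfacne,
        Finset.sum_congr rfl (fun w _ => natDegree_sub_C), Finset.sum_const, smul_eq_mul]
    -- arithmetic: natDegree ut < r
    have hAtop : q ^ (n - i + 1) ≤ A := by
      rw [hA]
      exact Finset.single_le_sum (f := fun j => q ^ j) (fun _ _ => by positivity)
        (Finset.mem_Ico.mpr (by omega))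
    have hsplitB : ∑ j ∈ Finset.range n, q ^ j
        = (∑ j ∈ Finset.range (n - i + 1), q ^ j) + A := by
      rw [hA]
      simp only [Finset.range_eq_Ico]
      exact (Finset.sum_Ico_consecutive _ (by omega) (by omega)).symm
    have hgeom := mygeom_le hq2 (n - i + 1)
    have hq1 : 1 ≤ q ^ (n - i + 1) := Nat.one_le_pow _ _ (by omega)
    have hBr : (∑ j ∈ Finset.range n, q ^ j) < p * r := by
      have h2A : 2 * A ≤ p * A := Nat.mul_le_mul_right _ hp2
      have hpr2 : p * r = p + p * A := by rw [hr]; ring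
      omega
    have hDr : ut.natDegree < r := by
      have h1 : p * ut.natDegree ≤ W.card * ut.natDegree :=
        Nat.mul_le_mul_right _ (Nat.le_of_dvd (by omega) hpW)
      have h2 : p * ut.natDegree < p * r := by omega
      exact Nat.lt_of_mul_lt_mul_left h2
    have hpr : ¬ p ∣ r := by
      have hpA : p ∣ A := by
        rw [hA]
        refine Finset.dvd_sum fun j hj => ?_
        rw [Finset.mem_Ico] at hj
        refine dvd_pow (by rw [hq]; exact dvd_pow_self p (by omega)) (by omega)
      intro hdvd
      have h1 : p ∣ 1 + A - A := Nat.dvd_sub (hr ▸ hdvd) hpA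
      simp at h1
      omega
    -- coefficient contradiction
    set PW : Polynomial k := ∏ w ∈ W, (X - C w) with hPW
    have hgPW : g = (PW.map (C : k →+* Polynomial k)).eval ut := by
      rw [← hkeyR, hPW, Polynomial.map_prod, eval_prod]
      exact (Finset.prod_congr rfl fun w _ => by simp).symm
    have hcoeff0 : g.coeff r = 0 := by
      rw [hgPW, eval_eq_sum_range, finset_sum_coeff]
      refine Finset.sum_eq_zero fun m _ => ?_
      rw [coeff_map, coeff_C_mul]
      rcases Nat.eq_zero_or_pos m with rfl | hm1
      · have h1 : PW.coeff 0 = 0 := by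
          rw [coeff_zero_eq_eval_zero, hPW]
          exact (addpoly_eval_mem 0).mpr hW0
        rw [h1, zero_mul]
      rcases eq_or_lt_of_le (show 1 ≤ m by omega) with h1 | hm2
      · rw [← h1, pow_one, coeff_eq_zero_of_natDegree_lt hDr, mul_zero]
      by_cases hpm : p ∣ m
      · obtain ⟨t, rfl⟩ := hpm
        have h2 : ((ut ^ (p * t)).coeff r) = 0 := by
          rw [mul_comm, pow_mul, ← Polynomial.map_frobenius_expand, coeff_map,
            Polynomial.coeff_expand (by omega : 0 < p), if_neg hpr, map_zero]
        rw [h2, mul_zero]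
      · have h3 : PW.coeff m = 0 := by
          rw [hPW]
          refine addpoly_coeff_eq_zero hWsub ⟨0, hW0⟩ (by omega) ?_
          rw [Ne, CharP.cast_eq_zero_iff k p]
          exact hpm
        rw [h3, zero_mul]
    rw [hcoeffg] at hcoeff0
    exact one_ne_zero hcoeff0

theorem stmt_10 (p e n i q : ℕ) [Fact p.Prime] (he : 0 < e) (hn : 2 ≤ n)
    (hi2 : 2 ≤ i) (hin : i ≤ n) (hq : q = p ^ e) :
    Irreducible
      ((∑ j ∈ Finset.range n,
          (X : Polynomial (Polynomial (AlgebraicClosure (ZMod p)))) ^ q ^ j)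
        - C (snq q n i (AlgebraicClosure (ZMod p)))) :=
  main_irred p e n i q he hn hi2 hin hq
end

section
/- Let m ≥ 1 with gcd(m, n) = 1, suppose p does not divide n, and let F be a field with q^m elements. Let f(x) ∈ F[x] be any polynomial (for example f = s_{n,i} for any 1 ≤ i ≤ n). Then the number of pairs (x, y) ∈ F × F satisfying y^{q^{n−1}} + y^{q^{n−2}} + … + y^q + y = f(x) equals exactly q^m; that is, for each x ∈ F there is exactly one y ∈ F solving the equation (so the curve E_i is median over F_{q^m}). -/
open Polynomial

theorem stmt_13 (p e n m q : ℕ) (hp : p.Prime) (he : 0 < e) (hn : 2 ≤ n)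
    (hm : 1 ≤ m) (hgcd : Nat.gcd m n = 1) (hpn : ¬ p ∣ n) (hq : q = p ^ e)
    (F : Type*) [Field F] (hF : Nat.card F = q ^ m)
    (f : Polynomial F) :
    Nat.card {z : F × F // ∑ j ∈ Finset.range n, z.2 ^ q ^ j = f.eval z.1} = q ^ m ∧
    ∀ x : F, ∃! y : F, ∑ j ∈ Finset.range n, y ^ q ^ j = f.eval x := by
  have hq1 : 1 < q := by
    subst hq; exact Nat.one_lt_pow he.ne' hp.one_lt
  have hcardpos : Nat.card F ≠ 0 := by
    rw [hF]; positivity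
  have hfin : Finite F := Nat.finite_of_card_ne_zero hcardpos
  have hfty : Fintype F := Fintype.ofFinite F
  have hfc : Fintype.card F = q ^ m := by rw [← Nat.card_eq_fintype_card, hF]
  -- characteristic of F is p
  obtain ⟨r, hr⟩ := CharP.exists F
  have hrp : r.Prime := CharP.char_is_prime F r
  obtain ⟨k, hk⟩ := FiniteField.card F r
  have hrq : r = p := by
    have h1 : r ∣ q ^ m := by
      rw [← hfc, hk.2]
      exact dvd_pow_self r k.2.ne'
    have h2 : r ∣ p := by
      subst hq
      rw [← pow_mul] at h1
      exact hrp.dvd_of_dvd_pow h1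
    exact (Nat.prime_dvd_prime_iff_eq hrp hp).mp h2
  rw [hrq] at hr
  haveI : CharP F p := hr
  haveI : Fact p.Prime := ⟨hp⟩
  -- the additive map g
  set g : F → F := fun y => ∑ j ∈ Finset.range n, y ^ q ^ j with hg
  have hqpow : ∀ (y : F) (j : ℕ), y ^ q ^ j = y ^ p ^ (e * j) := by
    intro y j
    rw [hq, ← pow_mul]
  -- frobenius
  have hfrob : ∀ y : F, (iterateFrobenius F p e) y = y ^ q := by
    intro y; rw [iterateFrobenius_def, hq]
  -- kernel of g is trivial
  have hker : ∀ y : F, g y = 0 → y = 0 := by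
    intro y hy
    -- step A : y ^ q ^ n = y
    have hA : y ^ q ^ n = y := by
      have h0 : (iterateFrobenius F p e) (g y) - g y = 0 := by
        rw [hy]; simp
      have h1 : (iterateFrobenius F p e) (g y) = ∑ j ∈ Finset.range n, y ^ q ^ (j + 1) := by
        rw [hg, map_sum]
        refine Finset.sum_congr rfl fun j _ => ?_
        rw [hfrob, ← pow_mul, ← pow_succ]
      rw [h1, hg] at h0
      have h2 : ∑ j ∈ Finset.range n, (y ^ q ^ (j + 1) - y ^ q ^ j) = y ^ q ^ n - y ^ q ^ 0 :=
        Finset.sum_range_sub (fun j => y ^ q ^ j) n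
      rw [Finset.sum_sub_distrib, h0] at h2
      have h3 : y ^ q ^ 0 = y := by simp
      rw [h3] at h2
      linear_combination -h2
    -- step B : y ^ q ^ m = y
    have hB : y ^ q ^ m = y := by
      rw [← hfc]; exact FiniteField.pow_card y
    -- fixed-point iteration lemma
    have hiter : ∀ (a : ℕ), y ^ q ^ a = y → ∀ c : ℕ, y ^ q ^ (a * c) = y := by
      intro a ha c
      induction c with
      | zero => simp
      | succ c ih =>
        have : q ^ (a * (c + 1)) = q ^ (a * c) * q ^ a := by
          rw [← pow_add]; ring_nf
        rw [this, pow_mul, ih, ha]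
    -- step C : y ^ q = y
    have hC : y ^ q = y := by
      have hco : Nat.Coprime m n := hgcd
      obtain ⟨b, -, hb⟩ := Nat.exists_mul_mod_eq_one_of_coprime hco (by omega)
      have hdm : m * b = n * (m * b / n) + 1 := by
        conv_lhs => rw [← Nat.div_add_mod (m * b) n]
        rw [hb]
      have h1 : y ^ q ^ (m * b) = y := hiter m hB b
      rw [hdm] at h1
      have h2 : q ^ (n * (m * b / n) + 1) = q ^ (n * (m * b / n)) * q := by
        rw [pow_succ]
      rw [h2, pow_mul, hiter n hA (m * b / n)] at h1
      exact h1
    -- step D : every term equals y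
    have hD : ∀ j : ℕ, y ^ q ^ j = y := by
      intro j
      induction j with
      | zero => simp
      | succ j ih => rw [pow_succ, pow_mul, ih, hC]
    have hsum : g y = n * y := by
      rw [hg]
      simp only [hD]
      rw [Finset.sum_const, Finset.card_range, nsmul_eq_mul]
    rw [hsum] at hy
    have hnne : (n : F) ≠ 0 := by
      rw [Ne, CharP.cast_eq_zero_iff F p]
      exact hpn
    exact (mul_eq_zero.mp hy).resolve_left hnne
  -- g is injective
  have hinj : Function.Injective g := by
    intro a b hab
    have hsub : g (a - b) = g a - g b := by
      rw [hg]
      simp only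
      rw [← Finset.sum_sub_distrib]
      refine Finset.sum_congr rfl fun j _ => ?_
      rw [hqpow (a - b) j, hqpow a j, hqpow b j]
      exact sub_pow_char_pow a b (e * j)
    have : g (a - b) = 0 := by rw [hsub, hab, sub_self]
    exact sub_eq_zero.mp (hker _ this)
  have hbij : Function.Bijective g := Finite.injective_iff_bijective.mp hinj
  -- the unique solution map
  have huniq : ∀ x : F, ∃! y : F, ∑ j ∈ Finset.range n, y ^ q ^ j = f.eval x := by
    intro x
    obtain ⟨y, hy⟩ := hbij.surjective (f.eval x)
    exact ⟨y, hy, fun z hz => hinj (hz.trans hy.symm)⟩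
  refine ⟨?_, huniq⟩
  -- cardinality via an equivalence with F
  have hequiv : {z : F × F // ∑ j ∈ Finset.range n, z.2 ^ q ^ j = f.eval z.1} ≃ F :=
    { toFun := fun z => z.1.1
      invFun := fun x => ⟨(x, (huniq x).choose), (huniq x).choose_spec.1⟩
      left_inv := by
        rintro ⟨⟨x, y⟩, hz⟩
        ext
        · rfl
        · exact ((huniq x).choose_spec.2 y hz).symm
      right_inv := fun x => rfl }
  rw [Nat.card_congr hequiv, hF]
end

section
/- Let K be a field with q^n elements and let τ, δ ∈ K satisfy δ^{q^{n−1}} + δ^{q^{n−2}} + … + δ^q + δ = s_{n,2}(τ). Let L be any field extension of K and let x, y ∈ L. Then y^{q^{n−1}} + y^{q^{n−2}} + … + y^q + y = s_{n,2}(x) holds if and only if, setting x' = x + τ and y' = y + x·(τ^q + τ^{q^2} + … + τ^{q^{n−1}}) + δ, one has y'^{q^{n−1}} + y'^{q^{n−2}} + … + y'^q + y' = s_{n,2}(x'). (Hence σ(x) = x + τ, σ(y) = y + x·(τ^q + … + τ^{q^{n−1}}) + δ defines an automorphism of the function field E_2 fixing the rational function field.) -/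
/-!
Write `Tr z = ∑_{j<n} z^{q^j}`, which is additive in characteristic `p`, and
`s_{n,2}(x) = ∑_{j<k<n} x^{q^j} x^{q^k}`. Expanding gives
`s_{n,2}(x + τ) = s_{n,2}(x) + (Tr x · Tr τ - Tr (x τ)) + s_{n,2}(τ)`.
Since `τ^{q^n} = τ`, `Tr τ` is fixed by `z ↦ z^q`, so with `τ^q + ⋯ + τ^{q^{n-1}} = Tr τ - τ`
the same cross term appears in `Tr (y + x (Tr τ - τ) + δ)`, while `Tr δ = s_{n,2}(τ)`.
Hence both sides of the second equation differ from those of the first by the same amount.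
-/

open Polynomial

lemma Finset.sum_powersetCard_two_range {M : Type*} [AddCommMonoid M] (f : Finset ℕ → M)
    (n : ℕ) :
    ∑ S ∈ Finset.powersetCard 2 (Finset.range n), f S
      = ∑ k ∈ Finset.range n, ∑ j ∈ Finset.range k, f {j, k} := by
  induction n with
  | zero => rfl
  | succ n ih =>
    have hn : n ∉ Finset.range n := Finset.notMem_range_self
    have hnS : ∀ S ∈ Finset.powersetCard 1 (Finset.range n), n ∉ S := fun S hS h =>
      hn ((Finset.mem_powersetCard.mp hS).1 h)
    rw [Finset.sum_range_succ, Finset.range_add_one, Finset.powersetCard_succ_insert hn,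
      Finset.sum_union, Finset.sum_image, ih, Finset.powersetCard_one, Finset.sum_map]
    · simp only [Function.Embedding.coeFn_mk, Finset.insert_eq, Finset.union_comm]
    · intro S hS S' hS' hins
      rw [← Finset.erase_insert (hnS S hS), ← Finset.erase_insert (hnS S' hS'), hins]
    · rw [Finset.disjoint_left]
      intro S hS hS'
      obtain ⟨S', -, rfl⟩ := Finset.mem_image.mp hS'
      exact hn ((Finset.mem_powersetCard.mp hS).1 (Finset.mem_insert_self n S'))

lemma Finset.sum_range_sum_range_mul_add_mul {R : Type*} [CommRing R] (u v : ℕ → R) (n : ℕ) :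
    ∑ k ∈ Finset.range n, ∑ j ∈ Finset.range k, (u j * v k + u k * v j)
      = (∑ j ∈ Finset.range n, u j) * (∑ j ∈ Finset.range n, v j)
        - ∑ j ∈ Finset.range n, u j * v j := by
  induction n with
  | zero => simp
  | succ n ih =>
    rw [Finset.sum_range_succ, Finset.sum_add_distrib, ih, Finset.sum_range_succ,
      Finset.sum_range_succ, Finset.sum_range_succ, ← Finset.sum_mul, ← Finset.mul_sum]
    ring

def qTrace {R : Type*} [CommRing R] (q n : ℕ) (z : R) : R := ∑ j ∈ Finset.range n, z ^ q ^ j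

lemma snq_two_eval {R : Type*} [CommRing R] (q n : ℕ) (t : R) :
    (snq q n 2 R).eval t
      = ∑ k ∈ Finset.range n, ∑ j ∈ Finset.range k, t ^ q ^ j * t ^ q ^ k := by
  rw [snq, eval_finsetSum, Finset.sum_powersetCard_two_range]
  refine Finset.sum_congr rfl fun k _ => Finset.sum_congr rfl fun j hj => ?_
  have hjk : j ∉ ({k} : Finset ℕ) := by simpa using (Finset.mem_range.mp hj).ne
  rw [eval_pow, eval_X, Finset.sum_insert hjk, Finset.sum_singleton, pow_add]

lemma snq_map {R S : Type*} [CommRing R] [CommRing S] (f : R →+* S) (q n i : ℕ) :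
    (snq q n i R).map f = snq q n i S := by
  simp [snq, Polynomial.map_sum]

section Frobenius

variable {R : Type*} [CommRing R] {p e q : ℕ} [ExpChar R p]

lemma add_pow_pow_of_eq_pow (hq : q = p ^ e) (a b : R) (j : ℕ) :
    (a + b) ^ q ^ j = a ^ q ^ j + b ^ q ^ j := by
  subst hq; simp only [← pow_mul, add_pow_expChar_pow]

lemma qTrace_add (hq : q = p ^ e) (n : ℕ) (a b : R) :
    qTrace q n (a + b) = qTrace q n a + qTrace q n b := by
  simp only [qTrace, add_pow_pow_of_eq_pow hq, Finset.sum_add_distrib]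

lemma qTrace_sub (hq : q = p ^ e) (n : ℕ) (a b : R) :
    qTrace q n (a - b) = qTrace q n a - qTrace q n b := by
  subst hq; simp only [qTrace, ← pow_mul, sub_pow_expChar_pow, Finset.sum_sub_distrib]

lemma qTrace_mul_of_pow_eq_self {a : R} (ha : a ^ q = a) (n : ℕ) (x : R) :
    qTrace q n (x * a) = qTrace q n x * a := by
  have hpow : ∀ j, a ^ q ^ j = a := fun j => by
    induction j with
    | zero => simp
    | succ j ih => rw [pow_succ, pow_mul, ih, ha]
  simp only [qTrace, mul_pow, hpow, Finset.sum_mul]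

lemma qTrace_pow_eq_self (hq : q = p ^ e) {n : ℕ} {c : R} (hc : c ^ q ^ n = c) :
    qTrace q n c ^ q = qTrace q n c := by
  have hq0 : q ≠ 0 := hq ▸ (expChar_pow_pos R p e).ne'
  cases n with
  | zero => simp [qTrace, hq0]
  | succ n =>
    calc qTrace q (n + 1) c ^ q = ∑ j ∈ Finset.range (n + 1), c ^ q ^ (j + 1) := by
          rw [qTrace, hq, sum_pow_char_pow]
          exact Finset.sum_congr rfl fun j _ => by rw [← pow_mul, ← pow_succ]
      _ = qTrace q (n + 1) c := by
          rw [qTrace, Finset.sum_range_succ, hc, Finset.sum_range_succ', pow_zero, pow_one]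

lemma snq_two_eval_add (hq : q = p ^ e) (n : ℕ) (x c : R) :
    (snq q n 2 R).eval (x + c) = (snq q n 2 R).eval x
      + (qTrace q n x * qTrace q n c - qTrace q n (x * c)) + (snq q n 2 R).eval c := by
  simp only [snq_two_eval, qTrace, mul_pow,
    ← Finset.sum_range_sum_range_mul_add_mul (fun j => x ^ q ^ j) (fun j => c ^ q ^ j),
    ← Finset.sum_add_distrib, add_pow_pow_of_eq_pow hq]
  exact Finset.sum_congr rfl fun k _ => Finset.sum_congr rfl fun j _ => by ring

theorem qTrace_eq_snq_two_eval_iff (hq : q = p ^ e) {n : ℕ} (hn : n ≠ 0) {c d : R}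
    (hc : c ^ q ^ n = c) (hcd : qTrace q n d = (snq q n 2 R).eval c) (x y : R) :
    qTrace q n y = (snq q n 2 R).eval x ↔
      qTrace q n (y + x * ∑ j ∈ Finset.Ico 1 n, c ^ q ^ j + d) = (snq q n 2 R).eval (x + c) := by
  have hIco : ∑ j ∈ Finset.Ico 1 n, c ^ q ^ j = qTrace q n c - c := by
    rw [Finset.sum_Ico_eq_sub _ (Nat.one_le_iff_ne_zero.mpr hn), qTrace]
    simp
  rw [hIco, qTrace_add hq, qTrace_add hq, mul_sub, qTrace_sub hq,
    qTrace_mul_of_pow_eq_self (qTrace_pow_eq_self hq hc), hcd, snq_two_eval_add hq]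
  constructor <;> intro h <;> linear_combination h

end Frobenius

theorem stmt_16_general (p e n q : ℕ) (hp : p.Prime) (hn : 2 ≤ n) (hq : q = p ^ e)
    (K : Type*) [Field K] (hK : Nat.card K = q ^ n)
    (τ δ : K)
    (hτδ : ∑ j ∈ Finset.range n, δ ^ q ^ j = (snq q n 2 K).eval τ)
    (L : Type*) [Field L] [Algebra K L] (x y : L) :
    (∑ j ∈ Finset.range n, y ^ q ^ j = (snq q n 2 L).eval x) ↔
      (∑ j ∈ Finset.range n,
          (y + x * (∑ j ∈ Finset.Ico 1 n, (algebraMap K L τ) ^ q ^ j) + algebraMap K L δ) ^ q ^ j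
        = (snq q n 2 L).eval (x + algebraMap K L τ)) := by
  have : Fact p.Prime := ⟨hp⟩
  have : Finite K := Nat.finite_of_card_ne_zero (by simp [hK, hq, hp.ne_zero])
  have : Fintype K := Fintype.ofFinite K
  have hcard : Fintype.card K = q ^ n := by rwa [← Nat.card_eq_fintype_card]
  have : CharP K p := charP_of_card_eq_prime_pow (f := e * n) (by rw [hcard, hq, pow_mul])
  have : ExpChar L p := expChar_of_injective_algebraMap (algebraMap K L).injective p
  have hτ : algebraMap K L τ ^ q ^ n = algebraMap K L τ := by
    rw [← map_pow, ← hcard, FiniteField.pow_card]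
  have hδ : qTrace q n (algebraMap K L δ) = (snq q n 2 L).eval (algebraMap K L τ) := by
    rw [← snq_map (algebraMap K L), eval_map, eval₂_at_apply, ← hτδ, qTrace, map_sum]
    simp only [map_pow]
  exact qTrace_eq_snq_two_eval_iff hq (by omega) hτ hδ x y

theorem stmt_16 (p e n q : ℕ) (hp : p.Prime) (he : 0 < e) (hn : 2 ≤ n) (hq : q = p ^ e)
    (K : Type*) [Field K] (hK : Nat.card K = q ^ n)
    (τ δ : K)
    (hτδ : ∑ j ∈ Finset.range n, δ ^ q ^ j = (snq q n 2 K).eval τ)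
    (L : Type*) [Field L] [Algebra K L] (x y : L) :
    (∑ j ∈ Finset.range n, y ^ q ^ j = (snq q n 2 L).eval x) ↔
      (∑ j ∈ Finset.range n,
          (y + x * (∑ j ∈ Finset.Ico 1 n, (algebraMap K L τ) ^ q ^ j) + algebraMap K L δ) ^ q ^ j
        = (snq q n 2 L).eval (x + algebraMap K L τ)) :=
  stmt_16_general p e n q hp hn hq K hK τ δ hτδ L x y
end

section
/- Let 2 ≤ i ≤ n and let F be a field with q^{2n} elements. Suppose α, β ∈ F satisfy β^{q^{n−1}} + β^{q^{n−2}} + … + β^q + β = s_{n,i}(α) and α ∉ F_{q^n}, i.e. α^{q^n} ≠ α. Then s_{n−1,i−1}(α) ∈ F_{q^n}, i.e. s_{n−1,i−1}(α)^{q^n} = s_{n−1,i−1}(α). (Hence the function field E_i has a place of degree two only if such α exists.) -/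
open Polynomial

section Aux

variable {F : Type*} [Field F] {p : ℕ} [Fact p.Prime] [CharP F p]

lemma snq_eval (q n i : ℕ) (x : F) :
    (snq q n i F).eval x
      = ∑ S ∈ Finset.powersetCard i (Finset.range n), x ^ (∑ j ∈ S, q ^ j) := by
  simp [snq, eval_finset_sum]

/-- Frobenius commutes with finite sums (with `q = p^e`-power exponents). -/
lemma sum_frob {ι : Type*} (e : ℕ) (s : Finset ι) (f : ι → F) (t : ℕ) :
    (∑ x ∈ s, f x) ^ (p ^ e) ^ t = ∑ x ∈ s, f x ^ (p ^ e) ^ t := by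
  have h := sum_pow_char_pow (p := p) (n := e * t) s f
  rwa [pow_mul] at h

/-- Frobenius commutes with the `snq`-type sums. -/
lemma snq_sum_pow (e : ℕ) (x : F) (t m k : ℕ) :
    (∑ T ∈ Finset.powersetCard k (Finset.range m), x ^ (∑ j ∈ T, (p ^ e) ^ j)) ^ (p ^ e) ^ t
      = ∑ T ∈ Finset.powersetCard k (Finset.range m),
          (x ^ (p ^ e) ^ t) ^ (∑ j ∈ T, (p ^ e) ^ j) := by
  rw [sum_frob]
  exact Finset.sum_congr rfl fun T _ => pow_right_comm x _ _

/-- The shift lemma: raising to the `q`-th power shifts the index set by one. -/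
lemma snq_sum_shift (e : ℕ) (x : F) (m k : ℕ) :
    (∑ T ∈ Finset.powersetCard k (Finset.range m), x ^ (∑ j ∈ T, (p ^ e) ^ j)) ^ p ^ e
      = ∑ T ∈ Finset.powersetCard k
          ((Finset.range m).map ⟨Nat.succ, Nat.succ_injective⟩),
          x ^ (∑ j ∈ T, (p ^ e) ^ j) := by
  rw [Finset.powersetCard_map, Finset.sum_map, sum_pow_char_pow]
  refine Finset.sum_congr rfl fun T _ => ?_
  rw [RelEmbedding.coe_toEmbedding, Finset.mapEmbedding_apply, Finset.sum_map]
  simp only [Function.Embedding.coeFn_mk]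
  rw [← pow_mul]
  congr 1
  rw [Finset.sum_mul]
  refine Finset.sum_congr rfl fun j _ => ?_
  rw [Nat.succ_eq_add_one, pow_succ]

/-- Splitting the sum over `powersetCard (k+1) (insert a M)`. -/
lemma snq_sum_insert (q : ℕ) (x : F) (a : ℕ) (M : Finset ℕ) (ha : a ∉ M) (k : ℕ) :
    ∑ T ∈ Finset.powersetCard (k + 1) (insert a M), x ^ (∑ j ∈ T, q ^ j)
      = (∑ T ∈ Finset.powersetCard (k + 1) M, x ^ (∑ j ∈ T, q ^ j))
        + x ^ q ^ a * ∑ T ∈ Finset.powersetCard k M, x ^ (∑ j ∈ T, q ^ j) := by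
  rw [Finset.powersetCard_succ_insert ha]
  rw [Finset.sum_union]
  · congr 1
    rw [Finset.sum_image]
    · rw [Finset.mul_sum]
      refine Finset.sum_congr rfl fun T hT => ?_
      have haT : a ∉ T := fun h =>
        ha ((Finset.mem_powersetCard.mp hT).1 h)
      rw [Finset.sum_insert haT, pow_add]
    · intro T1 h1 T2 h2 h
      have h1' : a ∉ T1 := fun h' => ha ((Finset.mem_powersetCard.mp h1).1 h')
      have h2' : a ∉ T2 := fun h' => ha ((Finset.mem_powersetCard.mp h2).1 h')
      have := congrArg (fun s => Finset.erase s a) h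
      simpa [Finset.erase_insert h1', Finset.erase_insert h2'] using this
  · rw [Finset.disjoint_left]
    intro T hT hT'
    obtain ⟨T', hT', rfl⟩ := Finset.mem_image.mp hT'
    exact (fun h' => (Finset.mem_powersetCard.mp hT).1 h' |> ha)
      (Finset.mem_insert_self a T')

/-- The key identity: `s^q = s + (x^{q^{m+1}} - x) * s'^q`. -/
lemma snq_key (e : ℕ) (x : F) (m k : ℕ) :
    (∑ T ∈ Finset.powersetCard (k + 1) (Finset.range (m + 1)),
        x ^ (∑ j ∈ T, (p ^ e) ^ j)) ^ p ^ e
      = (∑ T ∈ Finset.powersetCard (k + 1) (Finset.range (m + 1)),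
          x ^ (∑ j ∈ T, (p ^ e) ^ j))
        + (x ^ (p ^ e) ^ (m + 1) - x)
          * (∑ T ∈ Finset.powersetCard k (Finset.range m),
              x ^ (∑ j ∈ T, (p ^ e) ^ j)) ^ p ^ e := by
  have h0 : (0 : ℕ) ∉ (Finset.range m).map ⟨Nat.succ, Nat.succ_injective⟩ := by simp
  have hm1 : (m + 1) ∉ (Finset.range m).map ⟨Nat.succ, Nat.succ_injective⟩ := by
    simp only [Finset.mem_map, Finset.mem_range, Function.Embedding.coeFn_mk,
      Nat.succ_eq_add_one]
    rintro ⟨j, hj, hj'⟩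
    omega
  have hins0 : insert 0 ((Finset.range m).map ⟨Nat.succ, Nat.succ_injective⟩)
      = Finset.range (m + 1) := by
    ext a
    simp only [Finset.mem_insert, Finset.mem_map, Finset.mem_range,
      Function.Embedding.coeFn_mk, Nat.succ_eq_add_one]
    constructor
    · rintro (rfl | ⟨j, hj, rfl⟩) <;> omega
    · intro ha
      rcases a with _ | a
      · exact Or.inl rfl
      · exact Or.inr ⟨a, by omega, rfl⟩
  have hinsm : insert (m + 1) ((Finset.range m).map ⟨Nat.succ, Nat.succ_injective⟩)
      = (Finset.range (m + 1)).map ⟨Nat.succ, Nat.succ_injective⟩ := by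
    ext a
    simp only [Finset.mem_insert, Finset.mem_map, Finset.mem_range,
      Function.Embedding.coeFn_mk, Nat.succ_eq_add_one]
    constructor
    · rintro (rfl | ⟨j, hj, rfl⟩)
      · exact ⟨m, by omega, rfl⟩
      · exact ⟨j, by omega, rfl⟩
    · rintro ⟨j, hj, rfl⟩
      rcases Nat.lt_or_ge j m with h | h
      · exact Or.inr ⟨j, h, rfl⟩
      · exact Or.inl (by omega)
  rw [snq_sum_shift, ← hinsm, snq_sum_insert _ _ _ _ hm1,
    ← hins0, snq_sum_insert _ _ _ _ h0, snq_sum_shift]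
  rw [pow_zero, pow_one]
  ring

end Aux

theorem stmt_17 (p e n i q : ℕ) (hp : p.Prime) (he : 0 < e) (hn : 2 ≤ n)
    (hi2 : 2 ≤ i) (hin : i ≤ n) (hq : q = p ^ e)
    (F : Type*) [Field F] (hF : Nat.card F = q ^ (2 * n))
    (α β : F)
    (heq : ∑ j ∈ Finset.range n, β ^ q ^ j = (snq q n i F).eval α)
    (hα : α ^ q ^ n ≠ α) :
    ((snq q (n - 1) (i - 1) F).eval α) ^ q ^ n = (snq q (n - 1) (i - 1) F).eval α := by
  haveI : Fact p.Prime := ⟨hp⟩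
  subst hq
  -- F is finite with char p
  have hcard_ne : Nat.card F ≠ 0 := by
    rw [hF]
    exact (pow_pos (pow_pos hp.pos e) _).ne'
  haveI : Finite F := Nat.finite_of_card_ne_zero hcard_ne
  haveI : Fintype F := Fintype.ofFinite F
  have hFc : Fintype.card F = (p ^ e) ^ (2 * n) := by
    rw [← Nat.card_eq_fintype_card, hF]
  haveI hchar : CharP F p := by
    obtain ⟨r, hr⟩ := CharP.exists F
    haveI := hr
    have hrp : r.Prime := CharP.char_is_prime F r
    obtain ⟨m, -, hm⟩ := FiniteField.card F r
    have hdvd : p ∣ r ^ (m : ℕ) := by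
      rw [← hm, hFc, ← pow_mul]
      exact dvd_pow_self p (Nat.mul_ne_zero he.ne' (by omega))
    have : p = r := (Nat.prime_dvd_prime_iff_eq hp hrp).mp (hp.dvd_of_dvd_pow hdvd)
    rwa [this]
  -- basic power fact
  have hpow2n : ∀ x : F, x ^ (p ^ e) ^ (2 * n) = x := by
    intro x
    rw [← hFc]
    exact FiniteField.pow_card x
  obtain ⟨n', rfl⟩ : ∃ n', n = n' + 1 := ⟨n - 1, by omega⟩
  obtain ⟨i', rfl⟩ : ∃ i', i = i' + 1 := ⟨i - 1, by omega⟩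
  simp only [Nat.add_sub_cancel]
  rw [snq_eval] at heq
  -- γ := α ^ q^n  satisfies γ^{q^n} = α
  have hγn : (α ^ (p ^ e) ^ (n' + 1)) ^ (p ^ e) ^ (n' + 1) = α := by
    rw [← pow_mul, ← pow_add, ← two_mul]
    exact hpow2n α
  have hAB : (∑ T ∈ Finset.powersetCard (i' + 1) (Finset.range (n' + 1)),
        α ^ (∑ j ∈ T, (p ^ e) ^ j)) ^ (p ^ e) ^ (n' + 1)
      = ∑ T ∈ Finset.powersetCard (i' + 1) (Finset.range (n' + 1)),
          (α ^ (p ^ e) ^ (n' + 1)) ^ (∑ j ∈ T, (p ^ e) ^ j) :=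
    snq_sum_pow e α (n' + 1) (n' + 1) (i' + 1)
  -- the full trace of β is Frobenius-stable
  have hTrace : (∑ j ∈ Finset.range (2 * (n' + 1)), β ^ (p ^ e) ^ j) ^ p ^ e
      = ∑ j ∈ Finset.range (2 * (n' + 1)), β ^ (p ^ e) ^ j := by
    rw [sum_pow_char_pow]
    have h3 : ∀ j : ℕ, (β ^ (p ^ e) ^ j) ^ p ^ e = β ^ (p ^ e) ^ (j + 1) := by
      intro j; rw [← pow_mul, ← pow_succ]
    simp only [h3]
    have h4 := Finset.sum_range_succ' (fun j => β ^ (p ^ e) ^ j) (2 * (n' + 1))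
    have h5 := Finset.sum_range_succ (fun j => β ^ (p ^ e) ^ j) (2 * (n' + 1))
    have h6 : β ^ (p ^ e) ^ (2 * (n' + 1)) = β ^ (p ^ e) ^ 0 := by
      rw [pow_zero, pow_one]
      exact hpow2n β
    have h7 := h4.symm.trans h5
    rw [h6] at h7
    exact add_right_cancel h7
  -- trace = sA + sB
  have hsplit : ∑ j ∈ Finset.range (2 * (n' + 1)), β ^ (p ^ e) ^ j
      = (∑ T ∈ Finset.powersetCard (i' + 1) (Finset.range (n' + 1)),
          α ^ (∑ j ∈ T, (p ^ e) ^ j))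
        + ∑ T ∈ Finset.powersetCard (i' + 1) (Finset.range (n' + 1)),
            (α ^ (p ^ e) ^ (n' + 1)) ^ (∑ j ∈ T, (p ^ e) ^ j) := by
    rw [two_mul, Finset.sum_range_add, heq]
    congr 1
    · have hterm : ∀ j : ℕ,
          β ^ (p ^ e) ^ (n' + 1 + j) = (β ^ (p ^ e) ^ j) ^ (p ^ e) ^ (n' + 1) := by
        intro j
        rw [← pow_mul β ((p ^ e) ^ j) ((p ^ e) ^ (n' + 1)), ← pow_add,
          add_comm j (n' + 1)]
      calc ∑ j ∈ Finset.range (n' + 1), β ^ (p ^ e) ^ (n' + 1 + j)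
          = ∑ j ∈ Finset.range (n' + 1), (β ^ (p ^ e) ^ j) ^ (p ^ e) ^ (n' + 1) :=
            Finset.sum_congr rfl fun j _ => hterm j
        _ = (∑ j ∈ Finset.range (n' + 1), β ^ (p ^ e) ^ j) ^ (p ^ e) ^ (n' + 1) :=
            (sum_frob e _ _ _).symm
        _ = _ := by rw [heq]; exact hAB
  -- key identities
  have keyα := snq_key (p := p) e α n' i'
  have keyγ := snq_key (p := p) e (α ^ (p ^ e) ^ (n' + 1)) n' i'
  rw [hγn] at keyγ
  -- combine
  have h7 : ((∑ T ∈ Finset.powersetCard (i' + 1) (Finset.range (n' + 1)),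
        α ^ (∑ j ∈ T, (p ^ e) ^ j))
      + ∑ T ∈ Finset.powersetCard (i' + 1) (Finset.range (n' + 1)),
          (α ^ (p ^ e) ^ (n' + 1)) ^ (∑ j ∈ T, (p ^ e) ^ j)) ^ p ^ e
      = (∑ T ∈ Finset.powersetCard (i' + 1) (Finset.range (n' + 1)),
          α ^ (∑ j ∈ T, (p ^ e) ^ j))
        + ∑ T ∈ Finset.powersetCard (i' + 1) (Finset.range (n' + 1)),
            (α ^ (p ^ e) ^ (n' + 1)) ^ (∑ j ∈ T, (p ^ e) ^ j) := by
    rw [← hsplit]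
    exact hTrace
  rw [add_pow_char_pow, keyα, keyγ] at h7
  have hzero : (α ^ (p ^ e) ^ (n' + 1) - α)
      * ((∑ T ∈ Finset.powersetCard i' (Finset.range n'),
            α ^ (∑ j ∈ T, (p ^ e) ^ j)) ^ p ^ e
        - (∑ T ∈ Finset.powersetCard i' (Finset.range n'),
            (α ^ (p ^ e) ^ (n' + 1)) ^ (∑ j ∈ T, (p ^ e) ^ j)) ^ p ^ e) = 0 := by
    linear_combination h7
  have hne : α ^ (p ^ e) ^ (n' + 1) - α ≠ 0 := sub_ne_zero.mpr hα
  have hCeq := (mul_eq_zero.mp hzero).resolve_left hne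
  have hC := sub_eq_zero.mp hCeq
  -- Frobenius is injective, so the unraised sums agree
  have hfix : (∑ T ∈ Finset.powersetCard i' (Finset.range n'),
        α ^ (∑ j ∈ T, (p ^ e) ^ j))
      = ∑ T ∈ Finset.powersetCard i' (Finset.range n'),
          (α ^ (p ^ e) ^ (n' + 1)) ^ (∑ j ∈ T, (p ^ e) ^ j) := by
    have hsub : ((∑ T ∈ Finset.powersetCard i' (Finset.range n'),
          α ^ (∑ j ∈ T, (p ^ e) ^ j))
        - ∑ T ∈ Finset.powersetCard i' (Finset.range n'),
            (α ^ (p ^ e) ^ (n' + 1)) ^ (∑ j ∈ T, (p ^ e) ^ j)) ^ p ^ e = 0 := by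
      rw [sub_pow_char_pow, hC, sub_self]
    have := pow_eq_zero_iff (pow_ne_zero e hp.pos.ne') |>.mp hsub
    exact sub_eq_zero.mp this
  rw [snq_eval]
  rw [snq_sum_pow e α (n' + 1) n' i']
  exact hfix.symm
end
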